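/- arXiv:math/0208125 — 7 statements merged into one kernel-verified Lean document; each statement's English description precedes it below -/
import Mathlib

section
/- The map sending an alternating-sign matrix A = (a_{i,j})_{i,j=1}^n to its corner-sum matrix C = (c_{i,j})_{i,j=0}^n, where c_{i,j} = Σ_{i'≤i, j'≤j} a_{i',j'}, is a bijection from the set of ASMs of order n onto the set of (n+1)-by-(n+1) integer matrices (c_{i,j})_{i,j=0}^n whose first row and first column are all 0, whose last row and last column are 0,1,...,n in order, and in which each entry is equal to or one more than the preceding entry in its row and in its column. -/
/-- An alternating-sign matrix of order `n`: entries in `{-1,0,1}`, all partial sums of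
each row and each column (from the start) are `0` or `1`, and every row and column sums
to `1`.  This is equivalent to the condition that in each row and column the nonzero
entries alternate in sign, beginning and ending with `+1`. -/
def IsASM {n : ℕ} (A : Matrix (Fin n) (Fin n) ℤ) : Prop :=
  (∀ i j, A i j = -1 ∨ A i j = 0 ∨ A i j = 1) ∧
  (∀ i j, ∑ j' ∈ Finset.univ.filter (fun j' => j' ≤ j), A i j' = 0 ∨
          ∑ j' ∈ Finset.univ.filter (fun j' => j' ≤ j), A i j' = 1) ∧
  (∀ i j, ∑ i' ∈ Finset.univ.filter (fun i' => i' ≤ i), A i' j = 0 ∨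
          ∑ i' ∈ Finset.univ.filter (fun i' => i' ≤ i), A i' j = 1) ∧
  (∀ i, ∑ j, A i j = 1) ∧
  (∀ j, ∑ i, A i j = 1)

/-- The corner-sum matrix of an `n × n` matrix: `c i j = ∑_{i' < i, j' < j} A i' j'`. -/
def cornerSum {n : ℕ} (A : Matrix (Fin n) (Fin n) ℤ) :
    Matrix (Fin (n + 1)) (Fin (n + 1)) ℤ :=
  fun i j =>
    ∑ p ∈ Finset.univ.filter (fun p : Fin n × Fin n => (p.1 : ℕ) < i ∧ (p.2 : ℕ) < j),
      A p.1 p.2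

/-- A corner-sum matrix of order `n`: first row and first column all `0`, last row and
last column `0,1,…,n` in order, and each entry is equal to or one more than the
preceding entry in its row and in its column. -/
def IsCSM {n : ℕ} (C : Matrix (Fin (n + 1)) (Fin (n + 1)) ℤ) : Prop :=
  (∀ j, C 0 j = 0) ∧
  (∀ i, C i 0 = 0) ∧
  (∀ j, C (Fin.last n) j = (j : ℤ)) ∧
  (∀ i, C i (Fin.last n) = (i : ℤ)) ∧
  (∀ (i : Fin n) (j : Fin (n + 1)),
    C i.succ j = C i.castSucc j ∨ C i.succ j = C i.castSucc j + 1) ∧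
  (∀ (i : Fin (n + 1)) (j : Fin n),
    C i j.succ = C i j.castSucc ∨ C i j.succ = C i j.castSucc + 1)

/-! `cornerSum A` is the two-dimensional partial sum of `A`; its mixed second difference gives `A`
back and inverts `cornerSum` on matrices vanishing on their first row and column. Vertical
(horizontal) steps of `cornerSum A` are partial column (row) sums of `A`, and its last row and
column are the partial sums of the line sums of `A`. Hence the step condition of a corner-sum
matrix is the partial-sum condition of an ASM, and the last row and column read `0, 1, …, n`
exactly when all line sums are `1`. The entry condition comes for free: an entry is the
difference of two consecutive partial column sums, both in `{0, 1}`. -/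

open Finset Fin

section PartialSum

variable {M : Type*} {n : ℕ}

lemma sum_filter_val_lt_eq_partialSum [AddCommMonoid M] (f : Fin n → M) (i : Fin (n + 1)) :
    ∑ i' ∈ univ.filter (fun i' : Fin n => (i' : ℕ) < i), f i' = partialSum f i := by
  induction i using Fin.induction with
  | zero => simp
  | succ i ih =>
    have hinsert : univ.filter (fun i' : Fin n => (i' : ℕ) < i.succ) =
        insert i (univ.filter (fun i' : Fin n => (i' : ℕ) < i.castSucc)) := by
      ext i'
      simp only [mem_filter, mem_univ, true_and, mem_insert, val_succ, val_castSucc, Fin.ext_iff]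
      omega
    rw [hinsert, sum_insert (by simp), ih, partialSum_succ, add_comm]

lemma sum_filter_le_eq_partialSum_succ [AddCommMonoid M] (f : Fin n → M) (i : Fin n) :
    ∑ i' ∈ univ.filter (· ≤ i), f i' = partialSum f i.succ := by
  simp only [← sum_filter_val_lt_eq_partialSum, val_succ, Nat.lt_succ_iff, Fin.le_def]

lemma partialSum_last [AddCommMonoid M] (f : Fin n → M) : partialSum f (last n) = ∑ i, f i := by
  simp [← sum_filter_val_lt_eq_partialSum]

lemma partialSum_succ_sub_castSucc [AddCommGroup M] (g : Fin (n + 1) → M) (i : Fin (n + 1)) :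
    partialSum (fun k => g k.succ - g k.castSucc) i = g i - g 0 := by
  induction i using Fin.induction with
  | zero => simp
  | succ i ih => rw [partialSum_succ, ih]; abel

lemma forall_partialSum_eq_val_iff (f : Fin n → ℤ) :
    (∀ i, partialSum f i = i) ↔ ∀ i, f i = 1 := by
  refine ⟨fun h i => ?_, fun h i => ?_⟩
  · have hi := partialSum_succ f i
    rw [h, h, val_succ, val_castSucc] at hi
    omega
  · induction i using Fin.induction with
    | zero => simp
    | succ i ih => rw [partialSum_succ, ih, h, val_succ, val_castSucc]; push_cast; ring

lemma forall_partialSum_eq_zero_or_one_iff (f : Fin n → ℤ) :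
    (∀ i, partialSum f i = 0 ∨ partialSum f i = 1) ↔
      ∀ i, ∑ i' ∈ univ.filter (· ≤ i), f i' = 0 ∨ ∑ i' ∈ univ.filter (· ≤ i), f i' = 1 := by
  simp [Fin.forall_fin_succ, sum_filter_le_eq_partialSum_succ]

end PartialSum

section CornerSum

variable {n : ℕ} (A : Matrix (Fin n) (Fin n) ℤ)

lemma cornerSum_apply (i j : Fin (n + 1)) :
    cornerSum A i j = partialSum (fun i' => partialSum (A i') j) i := by
  simp only [← sum_filter_val_lt_eq_partialSum, cornerSum]
  rw [← sum_product' (f := fun i' j' => A i' j'), ← filter_product, univ_product_univ]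

lemma cornerSum_apply' (i j : Fin (n + 1)) :
    cornerSum A i j = partialSum (fun j' => partialSum (fun i' => A i' j') i) j := by
  simp only [← sum_filter_val_lt_eq_partialSum, cornerSum]
  rw [← sum_product_right' (f := fun i' j' => A i' j'), ← filter_product, univ_product_univ]

lemma cornerSum_zero_left (j : Fin (n + 1)) : cornerSum A 0 j = 0 := by
  simp [cornerSum_apply]

lemma cornerSum_zero_right (i : Fin (n + 1)) : cornerSum A i 0 = 0 := by
  simp [cornerSum_apply']

lemma cornerSum_succ_left (i : Fin n) (j : Fin (n + 1)) :
    cornerSum A i.succ j = cornerSum A i.castSucc j + partialSum (A i) j := by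
  simp only [cornerSum_apply, partialSum_succ]

lemma cornerSum_succ_right (i : Fin (n + 1)) (j : Fin n) :
    cornerSum A i j.succ = cornerSum A i j.castSucc + partialSum (fun i' => A i' j) i := by
  simp only [cornerSum_apply', partialSum_succ]

lemma forall_cornerSum_last_left_iff :
    (∀ j, cornerSum A (last n) j = j) ↔ ∀ j, ∑ i, A i j = 1 := by
  simp only [cornerSum_apply', partialSum_last, forall_partialSum_eq_val_iff]

lemma forall_cornerSum_last_right_iff :
    (∀ i, cornerSum A i (last n) = i) ↔ ∀ i, ∑ j, A i j = 1 := by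
  simp only [cornerSum_apply, partialSum_last, forall_partialSum_eq_val_iff]

lemma entry_eq_neg_one_or_zero_or_one
    (hcol : ∀ i j, ∑ i' ∈ univ.filter (· ≤ i), A i' j = 0 ∨
      ∑ i' ∈ univ.filter (· ≤ i), A i' j = 1) (i j : Fin n) :
    A i j = -1 ∨ A i j = 0 ∨ A i j = 1 := by
  have hprefix j := (forall_partialSum_eq_zero_or_one_iff (fun i' => A i' j)).2 (hcol · j)
  have hstep := partialSum_succ (fun i' => A i' j) i
  rcases hprefix j i.succ with h | h <;> rcases hprefix j i.castSucc with h' | h' <;> omega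

theorem isCSM_cornerSum_iff : IsCSM (cornerSum A) ↔ IsASM A := by
  have hrow : (∀ (i : Fin n) j, cornerSum A i.succ j = cornerSum A i.castSucc j ∨
      cornerSum A i.succ j = cornerSum A i.castSucc j + 1) ↔
      ∀ i j, ∑ j' ∈ univ.filter (· ≤ j), A i j' = 0 ∨ ∑ j' ∈ univ.filter (· ≤ j), A i j' = 1 := by
    simp only [cornerSum_succ_left, add_eq_left, add_right_inj,
      forall_partialSum_eq_zero_or_one_iff]
  have hcol : (∀ i (j : Fin n), cornerSum A i j.succ = cornerSum A i j.castSucc ∨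
      cornerSum A i j.succ = cornerSum A i j.castSucc + 1) ↔
      ∀ i j, ∑ i' ∈ univ.filter (· ≤ i), A i' j = 0 ∨ ∑ i' ∈ univ.filter (· ≤ i), A i' j = 1 := by
    rw [forall_comm]
    simp only [cornerSum_succ_right, add_eq_left, add_right_inj,
      forall_partialSum_eq_zero_or_one_iff (fun i' => A i' _)]
    exact forall_comm
  rw [IsCSM, IsASM, forall_cornerSum_last_left_iff, forall_cornerSum_last_right_iff, hrow, hcol]
  constructor
  · rintro ⟨-, -, hcolSum, hrowSum, hrowPrefix, hcolPrefix⟩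
    exact ⟨entry_eq_neg_one_or_zero_or_one A hcolPrefix, hrowPrefix, hcolPrefix, hrowSum, hcolSum⟩
  · rintro ⟨-, hrowPrefix, hcolPrefix, hrowSum, hcolSum⟩
    exact ⟨cornerSum_zero_left A, cornerSum_zero_right A, hcolSum, hrowSum, hrowPrefix, hcolPrefix⟩

end CornerSum

def cornerDiff {n : ℕ} (C : Matrix (Fin (n + 1)) (Fin (n + 1)) ℤ) : Matrix (Fin n) (Fin n) ℤ :=
  fun i j => C i.succ j.succ - C i.castSucc j.succ - C i.succ j.castSucc + C i.castSucc j.castSucc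

lemma cornerDiff_cornerSum {n : ℕ} (A : Matrix (Fin n) (Fin n) ℤ) :
    cornerDiff (cornerSum A) = A := by
  ext i j
  simp only [cornerDiff, cornerSum_succ_left, partialSum_succ]
  ring

lemma cornerSum_cornerDiff {n : ℕ} {C : Matrix (Fin (n + 1)) (Fin (n + 1)) ℤ}
    (hrow : ∀ j, C 0 j = 0) (hcol : ∀ i, C i 0 = 0) : cornerSum (cornerDiff C) = C := by
  ext i j
  have hinner (i' : Fin n) : partialSum (cornerDiff C i') j = C i'.succ j - C i'.castSucc j := by
    have htele := partialSum_succ_sub_castSucc (fun k => C i'.succ k - C i'.castSucc k) j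
    rw [hcol, hcol, sub_zero, sub_zero] at htele
    rw [← htele]
    congr 1
    ext k
    simp only [cornerDiff]
    ring
  simp only [cornerSum_apply, hinner, partialSum_succ_sub_castSucc (fun k => C k j), hrow, sub_zero]

/-- The map `A ↦ cornerSum A` is a bijection from the ASMs of order `n` onto the
corner-sum matrices of order `n`. -/
theorem cornerSum_bijOn (n : ℕ) :
    Set.BijOn (cornerSum (n := n))
      {A | IsASM A} {C | IsCSM C} := by
  refine ⟨fun A hA => (isCSM_cornerSum_iff A).2 hA,
    (Function.LeftInverse.injective cornerDiff_cornerSum).injOn, fun C hC => ?_⟩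
  have hinv : cornerSum (cornerDiff C) = C := cornerSum_cornerDiff hC.1 hC.2.1
  exact ⟨cornerDiff C, (isCSM_cornerSum_iff _).1 (by rwa [hinv]), hinv⟩
end

section
/- The map sending a corner-sum matrix (c_{i,j})_{i,j=0}^n to the matrix (h_{i,j}) with h_{i,j} = i + j - 2c_{i,j} is a bijection from corner-sum matrices of order n onto height-function matrices of order n, i.e., (n+1)-by-(n+1) integer matrices whose first row and first column are 0,1,...,n in order, whose last row and last column are n,n-1,...,0 in order, and in which any two row-adjacent or column-adjacent entries differ by exactly 1. -/
/-- A height-function matrix of order `n`: first row and first column are `0,1,…,n` in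
order, last row and last column are `n,n-1,…,0` in order, and horizontally or vertically
adjacent entries differ by exactly `1`. -/
def IsHFM {n : ℕ} (H : Matrix (Fin (n + 1)) (Fin (n + 1)) ℤ) : Prop :=
  (∀ j, H 0 j = (j : ℤ)) ∧
  (∀ i, H i 0 = (i : ℤ)) ∧
  (∀ j, H (Fin.last n) j = (n : ℤ) - (j : ℤ)) ∧
  (∀ i, H i (Fin.last n) = (n : ℤ) - (i : ℤ)) ∧
  (∀ (i : Fin n) (j : Fin (n + 1)), |H i.succ j - H i.castSucc j| = 1) ∧
  (∀ (i : Fin (n + 1)) (j : Fin n), |H i j.succ - H i j.castSucc| = 1)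

lemma hfm_even {n : ℕ} {H : Matrix (Fin (n + 1)) (Fin (n + 1)) ℤ} (h : IsHFM H)
    (i j : Fin (n + 1)) : Even ((i : ℤ) + (j : ℤ) - H i j) := by
  induction i using Fin.induction with
  | zero => rw [h.1]; simp
  | succ i ih =>
    have h5 := (abs_eq (by norm_num : (0:ℤ) ≤ 1)).mp (h.2.2.2.2.1 i j)
    have hv : ((i.succ : Fin (n + 1)) : ℤ) = ((i.castSucc : Fin (n + 1)) : ℤ) + 1 := by
      push_cast [Fin.val_succ, Fin.coe_castSucc]; ring
    rw [Int.even_iff] at ih ⊢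
    omega

/-- The map `c_{i,j} ↦ i + j - 2 c_{i,j}` is a bijection from corner-sum matrices of
order `n` onto height-function matrices of order `n`. -/
theorem csm_to_hfm_bijOn (n : ℕ) :
    Set.BijOn
      (fun (C : Matrix (Fin (n + 1)) (Fin (n + 1)) ℤ) =>
        (fun i j => (i : ℤ) + (j : ℤ) - 2 * C i j : Matrix (Fin (n + 1)) (Fin (n + 1)) ℤ))
      {C | IsCSM C} {H | IsHFM H} := by
  have hv1 : ∀ i : Fin n, ((i.succ : Fin (n + 1)) : ℤ) = ((i.castSucc : Fin (n + 1)) : ℤ) + 1 := by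
    intro i; push_cast [Fin.val_succ, Fin.coe_castSucc]; ring
  refine ⟨?_, ?_, ?_⟩
  · rintro C ⟨h1, h2, h3, h4, h5, h6⟩
    refine ⟨fun j => by simp [h1], fun i => by simp [h2], fun j => ?_, fun i => ?_,
      fun i j => ?_, fun i j => ?_⟩
    · show (Fin.last n : ℤ) + j - 2 * C (Fin.last n) j = _
      rw [h3]; simp [Fin.val_last]; ring
    · show (i : ℤ) + (Fin.last n : ℤ) - 2 * C i (Fin.last n) = _
      rw [h4]; simp [Fin.val_last]; ring
    · have := hv1 i
      rw [abs_eq (by norm_num : (0:ℤ) ≤ 1)]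
      rcases h5 i j with he | he <;> simp only [] <;> omega
    · have := hv1 j
      rw [abs_eq (by norm_num : (0:ℤ) ≤ 1)]
      rcases h6 i j with he | he <;> simp only [] <;> omega
  · rintro C - C' - h
    funext i j
    have := congr_fun (congr_fun h i) j
    simp only [] at this
    omega
  · rintro H hH
    have hH' := hH
    obtain ⟨h1, h2, h3, h4, h5, h6⟩ := hH
    set C : Matrix (Fin (n + 1)) (Fin (n + 1)) ℤ :=
      fun i j => ((i : ℤ) + (j : ℤ) - H i j) / 2 with hC
    have key : ∀ i j, 2 * C i j = (i : ℤ) + (j : ℤ) - H i j := by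
      intro i j
      obtain ⟨k, hk⟩ := hfm_even hH' i j
      simp only [hC]
      omega
    refine ⟨C, ⟨fun j => ?_, fun i => ?_, fun j => ?_, fun i => ?_, fun i j => ?_, fun i j => ?_⟩, ?_⟩
    · have := key 0 j; rw [h1] at this; simp at this ⊢; omega
    · have := key i 0; rw [h2] at this; simp at this ⊢; omega
    · have := key (Fin.last n) j; rw [h3] at this; simp [Fin.val_last] at this; omega
    · have := key i (Fin.last n); rw [h4] at this; simp [Fin.val_last] at this; omega
    · have ha := (abs_eq (by norm_num : (0:ℤ) ≤ 1)).mp (h5 i j)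
      have k1 := key i.succ j
      have k2 := key i.castSucc j
      have := hv1 i
      omega
    · have ha := (abs_eq (by norm_num : (0:ℤ) ≤ 1)).mp (h6 i j)
      have k1 := key i j.succ
      have k2 := key i j.castSucc
      have hv : ((j.succ : Fin (n + 1)) : ℤ) = ((j.castSucc : Fin (n + 1)) : ℤ) + 1 := by
        push_cast [Fin.val_succ, Fin.coe_castSucc]; ring
      omega
    · funext i j
      have := key i j
      simp only []
      omega
end

section
/- The composite map from ASMs of order n to height-function matrices of order n, given by h_{i,j} = i + j - 2·Σ_{i'≤i, j'≤j} a_{i',j'}, is a bijection. -/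
namespace ASMAux
open Finset

def below (n m : ℕ) : Finset (Fin n) := univ.filter (fun k => (k : ℕ) < m)

lemma below_zero {n : ℕ} : below n 0 = ∅ := by
  ext k; simp [below]

lemma not_mem_below {n : ℕ} (i : Fin n) : i ∉ below n i := by simp [below]

lemma below_succ {n : ℕ} (i : Fin n) : below n ((i : ℕ) + 1) = insert i (below n i) := by
  ext k
  simp only [below, mem_filter, mem_univ, true_and, mem_insert, Fin.ext_iff]
  omega

lemma below_top {n : ℕ} : below n n = univ := by
  ext k; simp [below, k.isLt]

lemma sum_below_succ {n : ℕ} (f : Fin n → ℤ) (i : Fin n) :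
    ∑ k ∈ below n ((i : ℕ) + 1), f k = ∑ k ∈ below n (i : ℕ), f k + f i := by
  rw [below_succ, sum_insert (not_mem_below i)]; ring

lemma filter_le_eq {n : ℕ} (j : Fin n) :
    univ.filter (fun j' => j' ≤ j) = below n ((j : ℕ) + 1) := by
  ext k
  simp only [below, mem_filter, mem_univ, true_and, Fin.le_def]
  omega

lemma cornerSum_eq {n : ℕ} (A : Matrix (Fin n) (Fin n) ℤ) (i j : Fin (n + 1)) :
    cornerSum A i j = ∑ i' ∈ below n (i : ℕ), ∑ j' ∈ below n (j : ℕ), A i' j' := by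
  have h : Finset.univ.filter (fun p : Fin n × Fin n => (p.1 : ℕ) < i ∧ (p.2 : ℕ) < j)
      = below n (i : ℕ) ×ˢ below n (j : ℕ) := by
    ext p
    simp only [below, Finset.mem_product, mem_filter, mem_univ, true_and]
  rw [cornerSum, h, Finset.sum_product]

lemma cornerSum_eq' {n : ℕ} (A : Matrix (Fin n) (Fin n) ℤ) (i j : Fin (n + 1)) :
    cornerSum A i j = ∑ j' ∈ below n (j : ℕ), ∑ i' ∈ below n (i : ℕ), A i' j' := by
  rw [cornerSum_eq, Finset.sum_comm]

lemma cs_row0 {n : ℕ} (A : Matrix (Fin n) (Fin n) ℤ) (j : Fin (n + 1)) :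
    cornerSum A 0 j = 0 := by
  rw [cornerSum_eq]; simp [below_zero]

lemma cs_col0 {n : ℕ} (A : Matrix (Fin n) (Fin n) ℤ) (i : Fin (n + 1)) :
    cornerSum A i 0 = 0 := by
  rw [cornerSum_eq']; simp [below_zero]

lemma cs_succ_row {n : ℕ} (A : Matrix (Fin n) (Fin n) ℤ) (i : Fin n) (j : Fin (n + 1)) :
    cornerSum A i.succ j = cornerSum A i.castSucc j + ∑ j' ∈ below n (j : ℕ), A i j' := by
  rw [cornerSum_eq, cornerSum_eq]
  simp only [Fin.val_succ, Fin.coe_castSucc]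
  exact sum_below_succ (fun i' => ∑ j' ∈ below n (j : ℕ), A i' j') i

lemma cs_succ_col {n : ℕ} (A : Matrix (Fin n) (Fin n) ℤ) (i : Fin (n + 1)) (j : Fin n) :
    cornerSum A i j.succ = cornerSum A i j.castSucc + ∑ i' ∈ below n (i : ℕ), A i' j := by
  rw [cornerSum_eq', cornerSum_eq']
  simp only [Fin.val_succ, Fin.coe_castSucc]
  exact sum_below_succ (fun j' => ∑ i' ∈ below n (i : ℕ), A i' j') j

lemma cs_sq {n : ℕ} (A : Matrix (Fin n) (Fin n) ℤ) (i j : Fin n) :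
    A i j = cornerSum A i.succ j.succ + cornerSum A i.castSucc j.castSucc
      - cornerSum A i.castSucc j.succ - cornerSum A i.succ j.castSucc := by
  rw [cs_succ_row A i j.succ, cs_succ_row A i j.castSucc]
  have h : ∑ j' ∈ below n ((j.succ : Fin (n+1)) : ℕ), A i j'
      = ∑ j' ∈ below n ((j.castSucc : Fin (n+1)) : ℕ), A i j' + A i j := by
    simp only [Fin.val_succ, Fin.coe_castSucc]
    exact sum_below_succ (fun j' => A i j') j
  rw [h]; ring

lemma sum_one_below {n : ℕ} (j : Fin (n + 1)) :
    ∑ _k ∈ below n (j : ℕ), (1 : ℤ) = (j : ℤ) := by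
  induction j using Fin.induction with
  | zero => simp [below_zero]
  | succ k ih =>
      simp only [Fin.val_succ]
      rw [sum_below_succ (fun _ => (1 : ℤ)) k]
      simp only [Fin.coe_castSucc] at ih
      rw [ih]; push_cast; ring

lemma corner_recon {n : ℕ} (C : Matrix (Fin (n + 1)) (Fin (n + 1)) ℤ)
    (h1 : ∀ j, C 0 j = 0) (h2 : ∀ i, C i 0 = 0) (i j : Fin (n + 1)) :
    cornerSum (fun a b => C a.succ b.succ + C a.castSucc b.castSucc
      - C a.castSucc b.succ - C a.succ b.castSucc) i j = C i j := by
  set A : Matrix (Fin n) (Fin n) ℤ := fun a b => C a.succ b.succ + C a.castSucc b.castSucc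
      - C a.castSucc b.succ - C a.succ b.castSucc with hA
  have hrow : ∀ (a : Fin n) (j : Fin (n + 1)),
      ∑ j' ∈ below n (j : ℕ), A a j' = C a.succ j - C a.castSucc j := by
    intro a j
    induction j using Fin.induction with
    | zero => simp [below_zero, h2]
    | succ k ih =>
        simp only [Fin.val_succ]
        rw [sum_below_succ (fun j' => A a j') k]
        simp only [Fin.coe_castSucc] at ih
        rw [ih, hA]; ring
  induction i using Fin.induction with
  | zero => rw [cs_row0, h1]
  | succ k ih =>
      rw [cs_succ_row, ih, hrow]; ring

end ASMAux


/-- The composite map `A ↦ (h_{i,j}) = (i + j - 2 Σ_{i'≤i, j'≤j} a_{i',j'})` is a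
bijection from ASMs of order `n` onto height-function matrices of order `n`. -/
theorem asm_to_hfm_bijOn (n : ℕ) :
    Set.BijOn
      (fun (A : Matrix (Fin n) (Fin n) ℤ) =>
        (fun i j => (i : ℤ) + (j : ℤ) - 2 * cornerSum A i j :
          Matrix (Fin (n + 1)) (Fin (n + 1)) ℤ))
      {A | IsASM A} {H | IsHFM H} := by
  open ASMAux in
  refine ⟨?_, ?_, ?_⟩
  · -- MapsTo
    rintro A ⟨hent, hrow, hcol, hrowsum, hcolsum⟩
    simp only [Set.mem_setOf_eq]
    have hlastrow : ∀ j : Fin (n + 1), cornerSum A (Fin.last n) j = (j : ℤ) := by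
      intro j
      rw [cornerSum_eq']
      simp only [Fin.val_last, below_top]
      calc ∑ j' ∈ below n (j : ℕ), ∑ i', A i' j'
          = ∑ _j' ∈ below n (j : ℕ), (1 : ℤ) := by
            exact Finset.sum_congr rfl (fun j' _ => hcolsum j')
        _ = (j : ℤ) := sum_one_below j
    have hlastcol : ∀ i : Fin (n + 1), cornerSum A i (Fin.last n) = (i : ℤ) := by
      intro i
      rw [cornerSum_eq]
      simp only [Fin.val_last, below_top]
      calc ∑ i' ∈ below n (i : ℕ), ∑ j', A i' j'
          = ∑ _i' ∈ below n (i : ℕ), (1 : ℤ) := by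
            exact Finset.sum_congr rfl (fun i' _ => hrowsum i')
        _ = (i : ℤ) := sum_one_below i
    have hrp : ∀ (i : Fin n) (j : Fin (n + 1)),
        ∑ j' ∈ below n (j : ℕ), A i j' = 0 ∨ ∑ j' ∈ below n (j : ℕ), A i j' = 1 := by
      intro i j
      induction j using Fin.cases with
      | zero => left; simp [below_zero]
      | succ k =>
          simp only [Fin.val_succ]
          rw [← filter_le_eq]
          exact hrow i k
    have hcp : ∀ (i : Fin (n + 1)) (j : Fin n),
        ∑ i' ∈ below n (i : ℕ), A i' j = 0 ∨ ∑ i' ∈ below n (i : ℕ), A i' j = 1 := by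
      intro i j
      induction i using Fin.cases with
      | zero => left; simp [below_zero]
      | succ k =>
          simp only [Fin.val_succ]
          rw [← filter_le_eq]
          exact hcol k j
    refine ⟨?_, ?_, ?_, ?_, ?_, ?_⟩
    · intro j; simp [cs_row0]
    · intro i; simp [cs_col0]
    · intro j; simp only; rw [hlastrow j]; simp [Fin.val_last]; ring
    · intro i; simp only; rw [hlastcol i]; simp [Fin.val_last]; ring
    · intro i j
      have h := cs_succ_row A i j
      rcases hrp i j with h0 | h0 <;>
        · simp only [h, h0, Fin.val_succ, Fin.coe_castSucc]
          push_cast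
          rw [abs_eq (by norm_num : (0:ℤ) ≤ 1)]
          omega
    · intro i j
      have h := cs_succ_col A i j
      rcases hcp i j with h0 | h0 <;>
        · simp only [h, h0, Fin.val_succ, Fin.coe_castSucc]
          push_cast
          rw [abs_eq (by norm_num : (0:ℤ) ≤ 1)]
          omega
  · -- InjOn
    intro A _ B _ hf
    have h : ∀ i j, cornerSum A i j = cornerSum B i j := by
      intro i j
      have := congrFun (congrFun hf i) j
      simp only at this
      linarith
    ext i j
    rw [cs_sq A i j, cs_sq B i j, h, h, h, h]
  · -- SurjOn
    rintro H ⟨h1, h2, h3, h4, h5, h6⟩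
    have hpar : ∀ i j : Fin (n + 1), (2 : ℤ) ∣ ((i : ℤ) + (j : ℤ) - H i j) := by
      intro i
      induction i using Fin.induction with
      | zero => intro j; rw [h1 j]; simp
      | succ i ih =>
          intro j
          have habs := h5 i j
          have hj := ih j
          rcases (abs_eq (by norm_num : (0:ℤ) ≤ 1)).mp habs with h | h <;>
            · simp only [Fin.val_succ, Fin.coe_castSucc] at *
              push_cast at *
              omega
    set C : Matrix (Fin (n + 1)) (Fin (n + 1)) ℤ :=
      fun i j => ((i : ℤ) + (j : ℤ) - H i j) / 2 with hCdef
    have hC : ∀ i j, 2 * C i j = (i : ℤ) + (j : ℤ) - H i j :=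
      fun i j => Int.mul_ediv_cancel' (hpar i j)
    have hC0 : ∀ j, C 0 j = 0 := by
      intro j
      have h := hC 0 j
      rw [h1 j] at h
      simp only [Fin.val_zero, Nat.cast_zero] at h
      omega
    have hC0' : ∀ i, C i 0 = 0 := by
      intro i
      have h := hC i 0
      rw [h2 i] at h
      simp only [Fin.val_zero, Nat.cast_zero] at h
      omega
    have hClr : ∀ j, C (Fin.last n) j = (j : ℤ) := by
      intro j
      have h := hC (Fin.last n) j
      rw [h3 j] at h
      simp only [Fin.val_last] at h
      omega
    have hClc : ∀ i, C i (Fin.last n) = (i : ℤ) := by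
      intro i
      have h := hC i (Fin.last n)
      rw [h4 i] at h
      simp only [Fin.val_last] at h
      omega
    have hDV : ∀ (i : Fin n) (j : Fin (n + 1)),
        C i.succ j - C i.castSucc j = 0 ∨ C i.succ j - C i.castSucc j = 1 := by
      intro i j
      have ha := hC i.succ j
      have hb := hC i.castSucc j
      have habs := (abs_eq (by norm_num : (0:ℤ) ≤ 1)).mp (h5 i j)
      simp only [Fin.val_succ, Fin.coe_castSucc] at ha hb
      push_cast at ha hb
      omega
    have hDH : ∀ (i : Fin (n + 1)) (j : Fin n),
        C i j.succ - C i j.castSucc = 0 ∨ C i j.succ - C i j.castSucc = 1 := by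
      intro i j
      have ha := hC i j.succ
      have hb := hC i j.castSucc
      have habs := (abs_eq (by norm_num : (0:ℤ) ≤ 1)).mp (h6 i j)
      simp only [Fin.val_succ, Fin.coe_castSucc] at ha hb
      push_cast at ha hb
      omega
    set A : Matrix (Fin n) (Fin n) ℤ := fun a b => C a.succ b.succ + C a.castSucc b.castSucc
      - C a.castSucc b.succ - C a.succ b.castSucc with hAdef
    have hcs : ∀ i j, cornerSum A i j = C i j := corner_recon C hC0 hC0'
    have hrowpart : ∀ (a : Fin n) (j : Fin (n + 1)),
        ∑ j' ∈ below n (j : ℕ), A a j' = C a.succ j - C a.castSucc j := by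
      intro a j
      have h := cs_succ_row A a j
      rw [hcs, hcs] at h
      omega
    have hcolpart : ∀ (i : Fin (n + 1)) (b : Fin n),
        ∑ i' ∈ below n (i : ℕ), A i' b = C i b.succ - C i b.castSucc := by
      intro i b
      have h := cs_succ_col A i b
      rw [hcs, hcs] at h
      omega
    refine ⟨A, ?_, ?_⟩
    · -- IsASM A
      refine ⟨?_, ?_, ?_, ?_, ?_⟩
      · intro i j
        have d1 := hDV i j.succ
        have d2 := hDV i j.castSucc
        simp only [hAdef]
        omega
      · intro i j
        rw [filter_le_eq j]
        have h := hrowpart i j.succ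
        simp only [Fin.val_succ] at h
        rw [h]
        exact hDV i j.succ
      · intro i j
        rw [filter_le_eq i]
        have h := hcolpart i.succ j
        simp only [Fin.val_succ] at h
        rw [h]
        exact hDH i.succ j
      · intro i
        have h := hrowpart i (Fin.last n)
        simp only [Fin.val_last, below_top] at h
        rw [h, hClc i.succ, hClc i.castSucc]
        simp only [Fin.val_succ, Fin.coe_castSucc]
        push_cast; ring
      · intro j
        have h := hcolpart (Fin.last n) j
        simp only [Fin.val_last, below_top] at h
        rw [h, hClr j.succ, hClr j.castSucc]
        simp only [Fin.val_succ, Fin.coe_castSucc]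
        push_cast; ring
    · -- maps to H
      funext i j
      simp only
      rw [hcs i j]
      have h := hC i j
      omega
end

section
/- The map taking an ASM A of order n to the triangular array whose i-th row lists, in increasing order, the columns j with Σ_{i'≤i} a_{i',j} = 1, is a bijection from ASMs of order n onto monotone triangles of order n: triangular arrays (t_{i,j})_{1≤j≤i≤n} of positive integers with bottom row t_{n,j} = j for all j, each row strictly increasing (t_{i,j} < t_{i,j+1}), and satisfying the interlacing condition t_{i+1,j} ≤ t_{i,j} ≤ t_{i+1,j+1}. -/
/-- A monotone triangle of order `n`, recorded as a function `t : ℕ → ℕ → ℕ` whose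
meaningful entries are `t i j` for `1 ≤ j ≤ i ≤ n` (row `i` has entries
`t i 1 < ⋯ < t i i`); entries outside this triangular range are normalized to `0`.
The bottom row is `1,2,…,n`, each row is strictly increasing, all entries are positive,
and consecutive rows interlace: `t (i+1) j ≤ t i j ≤ t (i+1) (j+1)`. -/
def IsMonotoneTriangle (n : ℕ) (t : ℕ → ℕ → ℕ) : Prop :=
  (∀ i j, 1 ≤ j → j ≤ i → i ≤ n → 1 ≤ t i j) ∧
  (∀ j, 1 ≤ j → j ≤ n → t n j = j) ∧
  (∀ i j, 1 ≤ j → j + 1 ≤ i → i ≤ n → t i j < t i (j + 1)) ∧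
  (∀ i j, 1 ≤ j → j ≤ i → i + 1 ≤ n → t (i + 1) j ≤ t i j ∧ t i j ≤ t (i + 1) (j + 1)) ∧
  (∀ i j, ¬(1 ≤ j ∧ j ≤ i ∧ i ≤ n) → t i j = 0)

/-- The triangular array associated to an ASM `A` of order `n`: the `i`-th row
(`1 ≤ i ≤ n`) lists, in increasing order, the (1-based) columns `j` such that
`Σ_{i' ≤ i} a_{i',j} = 1`; entries outside the triangle are `0`. -/
def asmTriangle {n : ℕ} (A : Matrix (Fin n) (Fin n) ℤ) : ℕ → ℕ → ℕ :=
  fun i j =>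
    if 1 ≤ j ∧ j ≤ i ∧ i ≤ n then
      (((Finset.univ.filter
            (fun c : Fin n =>
              (∑ r ∈ Finset.univ.filter (fun r : Fin n => (r : ℕ) < i), A r c) = 1)).sort
          (· ≤ ·)).map (fun c => (c : ℕ) + 1)).getD (j - 1) 0
    else 0

/-!
For an ASM `A` the column prefix sums `Σ_{r < i} A r c` are `0` or `1`; let `S i` be the set
of columns where they equal `1`. The row sums give `#(S i) = i`, the `i`-th row of the triangle
is the increasing enumeration of `S i`, and `A` is recovered from the chain
`S 0 = ∅, …, S n = univ` as `A r c = [c ∈ S (r + 1)] - [c ∈ S r]`. Conversely every monotone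
triangle arises in this way from the chain of the sets of its rows. The row-prefix condition on
`A` says that the counting functions `e ↦ #{x ∈ S i | x ≤ e}` of consecutive sets differ by `0`
or `1`, and this is equivalent to the interlacing of their increasing enumerations.
-/

open Finset

namespace Finset

variable {α : Type*} [LinearOrder α] {s t : Finset α} {k : ℕ}

theorem orderEmbOfFin_le_iff (h : #s = k) (j : Fin k) (e : α) :
    s.orderEmbOfFin h j ≤ e ↔ (j : ℕ) < #{x ∈ s | x ≤ e} := by
  set f := s.orderEmbOfFin h
  constructor
  · intro hje
    have hsub : (Iic j).map f.toEmbedding ⊆ {x ∈ s | x ≤ e} := by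
      simp only [subset_iff, mem_map, mem_Iic, mem_filter]
      rintro _ ⟨m, hmj, rfl⟩
      exact ⟨s.orderEmbOfFin_mem h m, (f.monotone hmj).trans hje⟩
    simpa using card_le_card hsub
  · intro hj
    by_contra! hej
    have hsub : {x ∈ s | x ≤ e} ⊆ (Iio j).map f.toEmbedding := by
      intro x hx
      rw [mem_filter, ← mem_coe, ← s.range_orderEmbOfFin h] at hx
      obtain ⟨⟨m, rfl⟩, hme⟩ := hx
      exact mem_map_of_mem _ (mem_Iio.2 (f.lt_iff_lt.1 (hme.trans_lt hej)))
    have := card_le_card hsub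
    simp at this
    omega

theorem orderEmbOfFin_interlace_iff (hs : #s = k) (ht : #t = k + 1) :
    (∀ j : Fin k, t.orderEmbOfFin ht j.castSucc ≤ s.orderEmbOfFin hs j ∧
        s.orderEmbOfFin hs j ≤ t.orderEmbOfFin ht j.succ) ↔
      ∀ e, #{x ∈ s | x ≤ e} ≤ #{x ∈ t | x ≤ e} ∧
        #{x ∈ t | x ≤ e} ≤ #{x ∈ s | x ≤ e} + 1 := by
  constructor
  · intro hst e
    have hs_le : #{x ∈ s | x ≤ e} ≤ k := (card_filter_le _ _).trans hs.le
    have ht_le : #{x ∈ t | x ≤ e} ≤ k + 1 := (card_filter_le _ _).trans ht.le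
    constructor
    · by_contra! hlt
      have hj := (orderEmbOfFin_le_iff hs ⟨#{x ∈ t | x ≤ e}, by omega⟩ e).2 hlt
      exact lt_irrefl _ ((orderEmbOfFin_le_iff ht _ e).1 ((hst _).1.trans hj))
    · by_contra! hlt
      have hj := (orderEmbOfFin_le_iff ht (Fin.succ ⟨#{x ∈ s | x ≤ e}, by omega⟩) e).2 hlt
      exact lt_irrefl _ ((orderEmbOfFin_le_iff hs _ e).1 ((hst _).2.trans hj))
  · intro hst j
    constructor
    · rw [orderEmbOfFin_le_iff, Fin.val_castSucc]
      exact ((orderEmbOfFin_le_iff hs j _).1 le_rfl).trans_le (hst _).1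
    · rw [orderEmbOfFin_le_iff]
      have := (orderEmbOfFin_le_iff ht j.succ _).1 le_rfl
      have := (hst (t.orderEmbOfFin ht j.succ)).2
      simp only [Fin.val_succ] at *
      omega

end Finset

namespace Fin

theorem filter_le_eq_filter_val_lt {n : ℕ} (x : Fin n) :
    univ.filter (· ≤ x) = univ.filter (fun r : Fin n => (r : ℕ) < (x : ℕ) + 1) := by
  refine Finset.ext fun r => ?_
  simp only [mem_filter, mem_univ, true_and, Fin.le_def]
  omega

theorem exists_val_add_one_eq {i j : ℕ} (hj : 1 ≤ j) (hji : j ≤ i) :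
    ∃ k : Fin i, (k : ℕ) + 1 = j :=
  ⟨⟨j - 1, by omega⟩, by simp only; omega⟩

end Fin

section

variable {n : ℕ}

def colPrefixSum (A : Matrix (Fin n) (Fin n) ℤ) (i : ℕ) (c : Fin n) : ℤ :=
  ∑ r ∈ univ.filter (fun r : Fin n => (r : ℕ) < i), A r c

def colPrefixOnes (A : Matrix (Fin n) (Fin n) ℤ) (i : ℕ) : Finset (Fin n) :=
  univ.filter (fun c => colPrefixSum A i c = 1)

def ofColPrefixOnes (S : ℕ → Finset (Fin n)) : Matrix (Fin n) (Fin n) ℤ :=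
  fun r c => (if c ∈ S (r + 1) then 1 else 0) - (if c ∈ S r then 1 else 0)

def triangleRowSet (n : ℕ) (t : ℕ → ℕ → ℕ) (i : ℕ) : Finset (Fin n) :=
  univ.filter fun c => (c : ℕ) + 1 ∈ (Icc 1 i).image (t i)

section colPrefixSum

variable (A : Matrix (Fin n) (Fin n) ℤ)

@[simp]
theorem colPrefixSum_zero (c : Fin n) : colPrefixSum A 0 c = 0 := by
  simp [colPrefixSum]

theorem colPrefixSum_succ (r c : Fin n) :
    colPrefixSum A (r + 1) c = colPrefixSum A r c + A r c := by
  have : univ.filter (fun r' : Fin n => (r' : ℕ) < r + 1) =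
      insert r (univ.filter (fun r' : Fin n => (r' : ℕ) < r)) := by
    ext r'
    simp [le_iff_eq_or_lt, Fin.val_inj]
  rw [colPrefixSum, this, sum_insert (by simp), add_comm]
  rfl

theorem colPrefixSum_self (c : Fin n) : colPrefixSum A n c = ∑ r, A r c := by
  simp [colPrefixSum]

theorem colPrefixOnes_zero : colPrefixOnes A 0 = ∅ := by
  simp [colPrefixOnes]

end colPrefixSum

@[simp]
theorem triangleRowSet_zero (t : ℕ → ℕ → ℕ) : triangleRowSet n t 0 = ∅ := by
  simp [triangleRowSet]

section ofColPrefixOnes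

variable (S : ℕ → Finset (Fin n))

theorem colPrefixSum_ofColPrefixOnes (hS : S 0 = ∅) {i : ℕ} (hi : i ≤ n) (c : Fin n) :
    colPrefixSum (ofColPrefixOnes S) i c = if c ∈ S i then 1 else 0 := by
  induction i with
  | zero => simp [hS]
  | succ i ih =>
    rw [← Fin.val_mk (show i < n by omega), colPrefixSum_succ, ih (by omega)]
    simp [ofColPrefixOnes]

theorem colPrefixOnes_ofColPrefixOnes (hS : S 0 = ∅) {i : ℕ} (hi : i ≤ n) :
    colPrefixOnes (ofColPrefixOnes S) i = S i := by
  ext c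
  simp [colPrefixOnes, colPrefixSum_ofColPrefixOnes S hS hi]

theorem sum_ofColPrefixOnes (r : Fin n) :
    ∑ c, ofColPrefixOnes S r c = (#(S (r + 1)) : ℤ) - #(S r) := by
  simp [ofColPrefixOnes, sum_sub_distrib]

theorem sum_filter_le_ofColPrefixOnes (r x : Fin n) :
    ∑ c ∈ univ.filter (· ≤ x), ofColPrefixOnes S r c =
      (#{c ∈ S (r + 1) | c ≤ x} : ℤ) - #{c ∈ S r | c ≤ x} := by
  simp [ofColPrefixOnes, sum_sub_distrib, filter_inter]

end ofColPrefixOnes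

theorem asmTriangle_apply {A : Matrix (Fin n) (Fin n) ℤ} {i : ℕ} {s : Finset (Fin n)}
    (hs : colPrefixOnes A i = s) (h : #s = i) (hi : i ≤ n) (k : Fin i) :
    asmTriangle A i (k + 1) = s.orderEmbOfFin h k + 1 := by
  subst hs
  -- the coercion `List (Fin n) → List ℕ` in `asmTriangle` elaborates to a `flatMap`
  have hcoe (L : List (Fin n)) : List.flatMap (fun c => [c.val]) L = L.map Fin.val :=
    List.flatMap_pure_eq_map Fin.val L
  rw [asmTriangle, if_pos ⟨by omega, k.isLt, hi⟩, Nat.add_sub_cancel]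
  simp only [List.pure_def, List.bind_eq_flatMap, hcoe, List.map_map]
  rw [List.getD_eq_getElem _ _ (by simpa using h.symm ▸ k.isLt), List.getElem_map,
    orderEmbOfFin_apply]
  rfl

theorem triangleRowSet_eq_of_orderEmbOfFin {t : ℕ → ℕ → ℕ} {i : ℕ} {s : Finset (Fin n)}
    (h : #s = i) (hts : ∀ k : Fin i, t i (k + 1) = s.orderEmbOfFin h k + 1) :
    triangleRowSet n t i = s := by
  ext c
  simp only [triangleRowSet, mem_filter, mem_univ, true_and, mem_image, mem_Icc]
  constructor
  · rintro ⟨j, ⟨hj, hji⟩, htj⟩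
    obtain ⟨k, rfl⟩ := Fin.exists_val_add_one_eq hj hji
    rw [hts k, Nat.add_right_cancel_iff, Fin.val_inj] at htj
    exact htj ▸ s.orderEmbOfFin_mem h k
  · intro hc
    rw [← mem_coe, ← s.range_orderEmbOfFin h] at hc
    obtain ⟨k, rfl⟩ := hc
    exact ⟨k + 1, ⟨by omega, k.isLt⟩, hts k⟩

namespace IsASM

variable {A : Matrix (Fin n) (Fin n) ℤ}

theorem colPrefixSum_eq_zero_or_one (hA : IsASM A) {i : ℕ} (hi : i ≤ n) (c : Fin n) :
    colPrefixSum A i c = 0 ∨ colPrefixSum A i c = 1 := by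
  cases i with
  | zero => simp
  | succ i =>
    have := hA.2.2.1 ⟨i, hi⟩ c
    rwa [Fin.filter_le_eq_filter_val_lt] at this

theorem colPrefixSum_eq_ite (hA : IsASM A) {i : ℕ} (hi : i ≤ n) (c : Fin n) :
    colPrefixSum A i c = if c ∈ colPrefixOnes A i then 1 else 0 := by
  rcases hA.colPrefixSum_eq_zero_or_one hi c with h | h <;> simp [colPrefixOnes, h]

theorem ofColPrefixOnes_colPrefixOnes (hA : IsASM A) : ofColPrefixOnes (colPrefixOnes A) = A := by
  ext r c
  rw [ofColPrefixOnes, ← hA.colPrefixSum_eq_ite r.isLt, ← hA.colPrefixSum_eq_ite (by omega),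
    colPrefixSum_succ]
  ring

theorem card_colPrefixOnes (hA : IsASM A) {i : ℕ} (hi : i ≤ n) : #(colPrefixOnes A i) = i := by
  induction i with
  | zero => simp [colPrefixOnes_zero]
  | succ i ih =>
    have := hA.2.2.2.1 ⟨i, hi⟩
    rw [← hA.ofColPrefixOnes_colPrefixOnes, sum_ofColPrefixOnes, Fin.val_mk,
      ih (by omega)] at this
    omega

theorem colPrefixOnes_self (hA : IsASM A) : colPrefixOnes A n = univ := by
  ext c
  simp [colPrefixOnes, colPrefixSum_self, hA.2.2.2.2 c]

theorem card_filter_colPrefixOnes_succ (hA : IsASM A) (r x : Fin n) :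
    #{c ∈ colPrefixOnes A r | c ≤ x} ≤ #{c ∈ colPrefixOnes A (r + 1) | c ≤ x} ∧
      #{c ∈ colPrefixOnes A (r + 1) | c ≤ x} ≤ #{c ∈ colPrefixOnes A r | c ≤ x} + 1 := by
  have := hA.2.1 r x
  rw [← hA.ofColPrefixOnes_colPrefixOnes, sum_filter_le_ofColPrefixOnes] at this
  omega

theorem isMonotoneTriangle_asmTriangle (hA : IsASM A) :
    IsMonotoneTriangle n (asmTriangle A) := by
  have hrow {i : ℕ} (hi : i ≤ n) (k : Fin i) :=
    asmTriangle_apply rfl (hA.card_colPrefixOnes hi) hi k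
  refine ⟨?_, ?_, ?_, ?_, fun i j hij => if_neg hij⟩
  · intro i j hj hji hi
    obtain ⟨k, rfl⟩ := Fin.exists_val_add_one_eq hj hji
    rw [hrow hi]
    omega
  · intro j hj hjn
    obtain ⟨k, rfl⟩ := Fin.exists_val_add_one_eq hj hjn
    have hid : id = (colPrefixOnes A n).orderEmbOfFin (hA.card_colPrefixOnes le_rfl) :=
      orderEmbOfFin_unique _ (by simp [hA.colPrefixOnes_self]) strictMono_id
    rw [hrow le_rfl, ← hid, id]
  · intro i j hj hji hi
    obtain ⟨k, rfl⟩ := Fin.exists_val_add_one_eq hj (by omega : j ≤ i)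
    rw [hrow hi k, hrow hi ⟨k + 1, hji⟩, add_lt_add_iff_right, Fin.val_fin_lt]
    exact OrderEmbedding.strictMono _ (Fin.lt_def.2 (Nat.lt_succ_self _))
  · intro i j hj hji hi
    obtain ⟨k, rfl⟩ := Fin.exists_val_add_one_eq hj hji
    have hinter := (orderEmbOfFin_interlace_iff (hA.card_colPrefixOnes (by omega : i ≤ n))
      (hA.card_colPrefixOnes hi)).2 (hA.card_filter_colPrefixOnes_succ ⟨i, hi⟩) k
    have h1 := hrow hi k.castSucc
    have h2 := hrow hi k.succ
    simp only [Fin.val_castSucc, Fin.val_succ] at h1 h2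
    rw [h1, h2, hrow (by omega)]
    simp only [Fin.le_def] at hinter
    omega

theorem triangleRowSet_asmTriangle (hA : IsASM A) {i : ℕ} (hi : i ≤ n) :
    triangleRowSet n (asmTriangle A) i = colPrefixOnes A i :=
  triangleRowSet_eq_of_orderEmbOfFin (hA.card_colPrefixOnes hi) (asmTriangle_apply rfl _ hi)

theorem ofColPrefixOnes_triangleRowSet (hA : IsASM A) :
    ofColPrefixOnes (triangleRowSet n (asmTriangle A)) = A := by
  conv_rhs => rw [← hA.ofColPrefixOnes_colPrefixOnes]
  ext r c
  rw [ofColPrefixOnes, ofColPrefixOnes, hA.triangleRowSet_asmTriangle r.isLt,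
    hA.triangleRowSet_asmTriangle r.isLt.le]

end IsASM

namespace IsMonotoneTriangle

variable {t : ℕ → ℕ → ℕ}

theorem strictMonoOn_row (ht : IsMonotoneTriangle n t) {i : ℕ} (hi : i ≤ n) :
    StrictMonoOn (t i) (Set.Icc 1 i) :=
  strictMonoOn_of_lt_add_one Set.ordConnected_Icc fun j _ hj hj1 => ht.2.2.1 i j hj.1 hj1.2 hi

theorem le_add_sub (ht : IsMonotoneTriangle n t) {i j : ℕ} (hj : 1 ≤ j) (hji : j ≤ i)
    (hi : i ≤ n) : t i j ≤ j + (n - i) := by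
  induction h : n - i generalizing i j with
  | zero => rw [show i = n by omega, ht.2.1 j hj (by omega)]; omega
  | succ d ih =>
    have := ih (i := i + 1) (j := j + 1) (by omega) (by omega) (by omega) (by omega)
    have := (ht.2.2.2.1 i j hj hji (by omega)).2
    omega

theorem exists_row_eq_orderEmbOfFin (ht : IsMonotoneTriangle n t) {i : ℕ} (hi : i ≤ n) :
    ∃ (s : Finset (Fin n)) (h : #s = i),
      ∀ k : Fin i, t i (k + 1) = s.orderEmbOfFin h k + 1 := by
  have hpos (k : Fin i) : 1 ≤ t i (k + 1) := ht.1 i (k + 1) (by omega) k.isLt hi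
  let f (k : Fin i) : Fin n :=
    ⟨t i (k + 1) - 1, by have := ht.le_add_sub (j := k + 1) (by omega) k.isLt hi; omega⟩
  have hf : StrictMono f := fun a b hab => by
    have : t i (a + 1) < t i (b + 1) := ht.strictMonoOn_row hi ⟨by omega, a.isLt⟩
      ⟨by omega, b.isLt⟩ (by rw [Fin.lt_def] at hab; omega)
    have := hpos a
    simp only [f, Fin.mk_lt_mk]
    omega
  have hcard : #(univ.image f) = i := by simp [card_image_of_injective _ hf.injective]
  refine ⟨_, hcard, fun k => ?_⟩
  rw [← orderEmbOfFin_unique hcard (fun k => mem_image_of_mem f (mem_univ k)) hf]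
  have := hpos k
  simp only [f]
  omega

theorem row_eq_orderEmbOfFin (ht : IsMonotoneTriangle n t) {i : ℕ} (hi : i ≤ n) :
    ∃ h : #(triangleRowSet n t i) = i,
      ∀ k : Fin i, t i (k + 1) = (triangleRowSet n t i).orderEmbOfFin h k + 1 := by
  obtain ⟨s, h, hts⟩ := ht.exists_row_eq_orderEmbOfFin hi
  obtain rfl := triangleRowSet_eq_of_orderEmbOfFin h hts
  exact ⟨h, hts⟩

theorem triangleRowSet_self (ht : IsMonotoneTriangle n t) : triangleRowSet n t n = univ := by
  ext c
  simpa [triangleRowSet] using ⟨c + 1, ⟨by omega, c.isLt⟩, ht.2.1 _ (by omega) c.isLt⟩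

theorem card_filter_triangleRowSet_succ (ht : IsMonotoneTriangle n t) (r x : Fin n) :
    #{c ∈ triangleRowSet n t r | c ≤ x} ≤ #{c ∈ triangleRowSet n t (r + 1) | c ≤ x} ∧
      #{c ∈ triangleRowSet n t (r + 1) | c ≤ x} ≤
        #{c ∈ triangleRowSet n t r | c ≤ x} + 1 := by
  obtain ⟨h, hrow⟩ := ht.row_eq_orderEmbOfFin (i := r) (by omega)
  obtain ⟨h', hrow'⟩ := ht.row_eq_orderEmbOfFin (i := r + 1) r.isLt
  refine (orderEmbOfFin_interlace_iff h h').1 (fun k => ?_) x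
  have hint := ht.2.2.2.1 r (k + 1) (by omega) k.isLt r.isLt
  have h1 := hrow' k.castSucc
  have h2 := hrow' k.succ
  simp only [Fin.val_castSucc, Fin.val_succ] at h1 h2
  rw [h1, h2, hrow k] at hint
  simp only [Fin.le_def]
  omega

theorem isASM_ofColPrefixOnes (ht : IsMonotoneTriangle n t) :
    IsASM (ofColPrefixOnes (triangleRowSet n t)) := by
  have hcard (i : ℕ) (hi : i ≤ n) : #(triangleRowSet n t i) = i :=
    (ht.row_eq_orderEmbOfFin hi).1
  refine ⟨?_, ?_, ?_, ?_, ?_⟩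
  · intro r c
    simp only [ofColPrefixOnes]
    split_ifs <;> simp
  · intro r x
    rw [sum_filter_le_ofColPrefixOnes]
    have := ht.card_filter_triangleRowSet_succ r x
    omega
  · intro x c
    rw [Fin.filter_le_eq_filter_val_lt]
    change colPrefixSum _ (x + 1) c = 0 ∨ colPrefixSum _ (x + 1) c = 1
    rw [colPrefixSum_ofColPrefixOnes _ (triangleRowSet_zero t) x.isLt]
    split_ifs <;> simp
  · intro r
    rw [sum_ofColPrefixOnes, hcard _ r.isLt, hcard r (by omega)]
    push_cast
    ring
  · intro c
    rw [← colPrefixSum_self, colPrefixSum_ofColPrefixOnes _ (triangleRowSet_zero t) le_rfl,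
      ht.triangleRowSet_self, if_pos (mem_univ c)]

theorem asmTriangle_ofColPrefixOnes (ht : IsMonotoneTriangle n t) :
    asmTriangle (ofColPrefixOnes (triangleRowSet n t)) = t := by
  funext i j
  by_cases hij : 1 ≤ j ∧ j ≤ i ∧ i ≤ n
  · obtain ⟨hj, hji, hi⟩ := hij
    obtain ⟨k, rfl⟩ := Fin.exists_val_add_one_eq hj hji
    obtain ⟨h, hrow⟩ := ht.row_eq_orderEmbOfFin hi
    rw [asmTriangle_apply (colPrefixOnes_ofColPrefixOnes _ (triangleRowSet_zero t) hi) h hi,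
      hrow k]
  · rw [asmTriangle, if_neg hij, ht.2.2.2.2 i j hij]

end IsMonotoneTriangle

end

/-- The map `A ↦ asmTriangle A` is a bijection from ASMs of order `n` onto monotone
triangles of order `n`. -/
theorem asmTriangle_bijOn (n : ℕ) :
    Set.BijOn (asmTriangle (n := n)) {A | IsASM A} {t | IsMonotoneTriangle n t} :=
  Set.InvOn.bijOn (f' := fun t => ofColPrefixOnes (triangleRowSet n t))
    ⟨fun _ hA => IsASM.ofColPrefixOnes_triangleRowSet hA,
      fun _ ht => IsMonotoneTriangle.asmTriangle_ofColPrefixOnes ht⟩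
    (fun _ hA => hA.isMonotoneTriangle_asmTriangle) (fun _ ht => ht.isASM_ofColPrefixOnes)
end

section
/- If G : ℕ → ℚ satisfies G_0 = G_1 = G_2 = 1 and G_{k+1} = 3 G_k G_{k-1} / G_{k-2} for k ≥ 2, then G_n = 3^{⌊(n-1)²/4⌋} for all n ≥ 1. -/
private lemma cube_expid (m : ℕ) :
    1 + (m + 1) ^ 2 / 4 + m ^ 2 / 4 = (m + 2) ^ 2 / 4 + (m - 1) ^ 2 / 4 := by
  match m with
  | 0 => decide
  | k + 1 =>
    simp only [Nat.add_sub_cancel]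
    obtain ⟨t, rfl | rfl⟩ := Nat.even_or_odd' k
    · have e1 : (2 * t + 1 + 1) ^ 2 = 4 * (t * t + 2 * t) + 4 := by ring
      have e2 : (2 * t + 1) ^ 2 = 4 * (t * t + t) + 1 := by ring
      have e3 : (2 * t + 1 + 2) ^ 2 = 4 * (t * t + 3 * t + 2) + 1 := by ring
      have e4 : (2 * t) ^ 2 = 4 * (t * t) := by ring
      rw [e1, e2, e3, e4]
      generalize t * t = s
      omega
    · have e1 : (2 * t + 1 + 1 + 1) ^ 2 = 4 * (t * t + 3 * t + 2) + 1 := by ring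
      have e2 : (2 * t + 1 + 1) ^ 2 = 4 * (t * t + 2 * t) + 4 := by ring
      have e3 : (2 * t + 1 + 1 + 2) ^ 2 = 4 * (t * t + 4 * t + 4) := by ring
      have e4 : (2 * t + 1) ^ 2 = 4 * (t * t + t) + 1 := by ring
      rw [e1, e2, e3, e4]
      generalize t * t = s
      omega

/-- If `G 0 = G 1 = G 2 = 1` and `G (k+1) = 3 G k · G (k-1) / G (k-2)` for `k ≥ 2`,
then `G n = 3 ^ ⌊(n-1)²/4⌋` for all `n ≥ 1`. -/
theorem cube_recurrence_specialization (G : ℕ → ℚ) (h0 : G 0 = 1) (h1 : G 1 = 1)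
    (h2 : G 2 = 1)
    (hrec : ∀ k, 2 ≤ k → G (k + 1) = 3 * G k * G (k - 1) / G (k - 2)) :
    ∀ n, 1 ≤ n → G n = 3 ^ ((n - 1) ^ 2 / 4) := by
  have key : ∀ n, G n = 3 ^ ((n - 1) ^ 2 / 4) := by
    intro n
    induction n using Nat.strong_induction_on with
    | _ n ih =>
      match n, ih with
      | 0, _ => simpa using h0
      | 1, _ => simpa using h1
      | 2, _ => simpa using h2
      | (m + 3), ih =>
        have hr : G (m + 3) = 3 * G (m + 2) * G (m + 1) / G m := hrec (m + 2) (by omega)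
        have g1 : G (m + 2) = 3 ^ ((m + 1) ^ 2 / 4) := by simpa using ih (m + 2) (by omega)
        have g2 : G (m + 1) = 3 ^ (m ^ 2 / 4) := by simpa using ih (m + 1) (by omega)
        have g3 : G m = 3 ^ ((m - 1) ^ 2 / 4) := ih m (by omega)
        have h34 : m + 3 - 1 = m + 2 := by omega
        rw [hr, g1, g2, g3, h34, div_eq_iff (pow_ne_zero _ (by norm_num : (3:ℚ) ≠ 0))]
        have lhs : (3:ℚ) * 3 ^ ((m + 1) ^ 2 / 4) * 3 ^ (m ^ 2 / 4)
            = 3 ^ (1 + (m + 1) ^ 2 / 4 + m ^ 2 / 4) := by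
          rw [pow_add, pow_add, pow_one]
        rw [lhs, ← pow_add, cube_expid m]
  intro n _
  exact key n
end

section
/- The sum over all alternating-sign matrices A of order n of 2^{μ(A)}, where μ(A) is the number of entries of A equal to -1, equals 2^{n(n-1)/2}. -/
/-!
Let `Z(b)` be the `2`-weighted count of the top `k` rows of ASMs after which exactly the columns
`b 0 < ⋯ < b (k-1)` have sum `1`. Removing the last of `k + 1` such rows leaves `k` rows whose
column sums are `1` at positions `a` interlacing `b` (the monotone-triangle bijection), and the
removed row has one `-1` for each `i` with `b i < a i < b (i+1)`. So
`Z(b) = ∑_{a interlacing b} 2 ^ #{i | b i < a i < b (i+1)} Z(a)`, and this recursion is solved by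
`Z(b) = 2 ^ (k choose 2) det (b i choose j)`: by multilinearity the sum over the box of `a`
becomes a determinant of row sums, and `∑_{x=p}^{q} w(x) (x choose j) = G(q) - G(p)` with
`G(y) = 2 (y choose (j+1)) + (y choose j)` and weight `w = 2` inside, `1` at the ends; expressing
`G` in the binomial basis gives the factor `2 ^ k`. For `b = (0, …, n-1)` the binomial matrix is
unitriangular.
-/

open Finset Matrix

namespace ASM

lemma det_eq_det_sub_of_forall_apply_zero_eq_one {R : Type*} [CommRing R] {k : ℕ}
    (M : Matrix (Fin (k + 1)) (Fin (k + 1)) R) (h : ∀ i, M i 0 = 1) :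
    M.det = (of fun i j : Fin k => M i.succ j.succ - M i.castSucc j.succ).det := by
  let N : Matrix (Fin (k + 1)) (Fin (k + 1)) R := Fin.cases (M 0) fun i => M i.succ - M i.castSucc
  have hMN : M.det = N.det :=
    det_eq_of_forall_row_eq_smul_add_pred (fun _ => 1) (fun _ => rfl) fun i j => by simp [N]
  rw [hMN, det_succ_column_zero, Fin.sum_univ_succ, Finset.sum_eq_zero fun i _ => by simp [N, h]]
  simp [N, h, submatrix]

def bidiag (k : ℕ) : Matrix (Fin k) (Fin k) ℤ :=
  of fun m j => if m = j then 2 else if (m : ℕ) + 1 = j then 1 else 0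

lemma det_bidiag (k : ℕ) : (bidiag k).det = 2 ^ k := by
  rw [det_of_isUpperTriangular fun m j (h : j < m) => ?_]
  · simp [bidiag]
  · simp only [bidiag, of_apply, if_neg h.ne', ite_eq_right_iff]
    omega

lemma mul_bidiag_apply {m k : ℕ} (A : Matrix (Fin m) (Fin k) ℤ) (f : Fin m → ℕ → ℤ)
    (hA : ∀ i l, A i l = f i (l + 1)) (hf : ∀ i, f i 0 = 0) (i : Fin m) (j : Fin k) :
    (A * bidiag k) i j = 2 * f i (j + 1) + f i j := by
  have hsplit : ∀ l : Fin k, A i l * bidiag k l j =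
      (if l = j then 2 * f i (j + 1) else 0) + (if (l : ℕ) + 1 = j then f i j else 0) := by
    intro l
    simp only [bidiag, of_apply, hA]
    split_ifs <;> grind
  rw [mul_apply, sum_congr rfl fun l _ => hsplit l, sum_add_distrib, sum_ite_eq' univ j]
  rcases Nat.eq_zero_or_pos (j : ℕ) with h0 | hpos
  · simp [h0, hf]
  · have hprev : ∀ l : Fin k, (l : ℕ) + 1 = j ↔ l = ⟨j - 1, by omega⟩ := by
      intro l; simp only [Fin.ext_iff]; omega
    simp only [hprev, sum_ite_eq', mem_univ, if_true]

/-- Equals the Vandermonde determinant of `a` divided by `0! 1! ⋯ (m - 1)!`. -/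
def binomialDet {m : ℕ} (a : Fin m → ℕ) : ℤ := (of fun i j : Fin m => ((a i).choose j : ℤ)).det

lemma binomialDet_eq_zero {m : ℕ} {a : Fin m → ℕ} (ha : ¬ Function.Injective a) :
    binomialDet a = 0 := by
  obtain ⟨i, i', h, hne⟩ := Function.not_injective_iff.mp ha
  exact det_zero_of_row_eq hne (by ext j; simp [h])

lemma binomialDet_val (m : ℕ) : binomialDet (fun i : Fin m => (i : ℕ)) = 1 := by
  rw [binomialDet, det_of_isLowerTriangular _ fun i j h => ?_]
  · simp
  · simp [Nat.choose_eq_zero_of_lt (show (i : ℕ) < j from h)]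

-- Weight `2` inside and `1` at the ends splits the sum as `∑_{Ico p q} + ∑_{Ioc p q}`; writing
-- the right side as `G q - G p`, it telescopes since
-- `G (x + 1) - G x = (x choose j) + (x + 1 choose j)`.
lemma sum_Icc_weight_mul_choose {p q : ℕ} (hpq : p < q) (j : ℕ) :
    ∑ x ∈ Icc p q, (if p < x ∧ x < q then (2 : ℤ) else 1) * x.choose j =
      (2 * q.choose (j + 1) + q.choose j) - (2 * p.choose (j + 1) + p.choose j) := by
  have hweight : ∀ x ∈ Icc p q, (if p < x ∧ x < q then (2 : ℤ) else 1) * x.choose j =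
      (if x < q then (x.choose j : ℤ) else 0) + (if p < x then (x.choose j : ℤ) else 0) := by
    intro x hx
    rw [mem_Icc] at hx
    split_ifs <;> grind
  have hIco : Ico p q = (Icc p q).filter (· < q) := by ext; simp; omega
  have hIoc : Ioc p q = (Icc p q).filter (p < ·) := by ext; simp; omega
  rw [sum_congr rfl hweight, sum_add_distrib, ← sum_filter, ← sum_filter, ← hIco, ← hIoc,
    ← Ico_add_one_add_one_eq_Ioc, ← sum_Ico_add', ← sum_add_distrib,
    ← sum_Ico_sub (f := fun y => 2 * (y.choose (j + 1) : ℤ) + y.choose j) hpq.le]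
  refine sum_congr rfl fun x _ => ?_
  simp only [Nat.choose_succ_succ', Nat.cast_add]
  ring

section RangeIndicator

variable {n m : ℕ}

def rangeIndicator (c : Fin m → ℕ) : Fin n → ℤ := fun j => if ∃ i, c i = j then 1 else 0

def countLE (c : Fin m → ℕ) (t : ℕ) : ℕ := #{i | c i ≤ t}

lemma rangeIndicator_eq_zero_or_one (c : Fin m → ℕ) (j : Fin n) :
    rangeIndicator c j = 0 ∨ rangeIndicator c j = 1 := by
  unfold rangeIndicator; split_ifs <;> simp

lemma rangeIndicator_eq_one_iff {c : Fin m → ℕ} {j : Fin n} :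
    rangeIndicator c j = 1 ↔ ∃ i, c i = j := by
  simp [rangeIndicator]

lemma rangeIndicator_eq_zero_iff {c : Fin m → ℕ} {j : Fin n} :
    rangeIndicator c j = 0 ↔ ¬ ∃ i, c i = j := by
  simp [rangeIndicator]

lemma card_filter_eq_one {v : Fin n → ℤ} (hv : ∀ j, v j = 0 ∨ v j = 1) :
    (#{j | v j = 1} : ℤ) = ∑ j, v j := by
  rw [natCast_card_filter]
  refine sum_congr rfl fun j _ => ?_
  rcases hv j with h | h <;> simp [h]

lemma lt_countLE_iff {c : Fin m → ℕ} (hc : Monotone c) {i : Fin m} {t : ℕ} :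
    (i : ℕ) < countLE c t ↔ c i ≤ t := by
  constructor
  · intro h
    by_contra! hct
    have hsub : ({l | c l ≤ t} : Finset (Fin m)) ⊆ Iio i := fun l hl => by
      simp only [mem_filter, mem_univ, true_and] at hl
      exact mem_Iio.mpr (lt_of_not_ge fun hil => hct.not_ge ((hc hil).trans hl))
    have := card_le_card hsub
    rw [Fin.card_Iio] at this
    exact absurd h (not_lt.mpr this)
  · intro h
    have hsub : Iic i ⊆ ({l | c l ≤ t} : Finset (Fin m)) := fun l hl => by
      simp only [mem_filter, mem_univ, true_and]
      exact (hc (mem_Iic.mp hl)).trans h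
    have := card_le_card hsub
    rw [Fin.card_Iic] at this
    exact this

lemma sum_filter_rangeIndicator {c : Fin m → ℕ} (hc : Function.Injective c) (hcn : ∀ i, c i < n)
    (p : ℕ → Prop) [DecidablePred p] :
    ∑ j ∈ {j : Fin n | p j}, rangeIndicator c j = #{i | p (c i)} := by
  simp only [rangeIndicator]
  rw [sum_boole, filter_filter]
  norm_cast
  refine (card_bij (fun i _ => (⟨c i, hcn i⟩ : Fin n)) (fun i hi => ?_) (fun i₁ _ i₂ _ h => ?_)
    fun j hj => ?_).symm
  · simp only [mem_filter, mem_univ, true_and] at hi ⊢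
    exact ⟨hi, i, rfl⟩
  · exact hc (Fin.mk.inj_iff.mp h)
  · simp only [mem_filter, mem_univ, true_and] at hj ⊢
    obtain ⟨hp, i, hi⟩ := hj
    exact ⟨i, hi ▸ hp, Fin.ext hi⟩

lemma sum_rangeIndicator_le {c : Fin m → ℕ} (hc : Function.Injective c) (hcn : ∀ i, c i < n)
    (j : Fin n) : ∑ j' ∈ {j' | j' ≤ j}, rangeIndicator c j' = countLE c j :=
  sum_filter_rangeIndicator hc hcn (· ≤ (j : ℕ))

lemma sum_rangeIndicator {c : Fin m → ℕ} (hc : Function.Injective c) (hcn : ∀ i, c i < n) :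
    ∑ j : Fin n, rangeIndicator c j = m := by
  simpa using sum_filter_rangeIndicator hc hcn fun _ => True

end RangeIndicator

section Interlacing

variable {n k : ℕ} {a : Fin k → ℕ} {b : Fin (k + 1) → ℕ}

def interlacing (b : Fin (k + 1) → ℕ) : Finset (Fin k → ℕ) :=
  Icc (fun i => b i.castSucc) (fun i => b i.succ)

lemma mem_interlacing : a ∈ interlacing b ↔ ∀ i, b i.castSucc ≤ a i ∧ a i ≤ b i.succ := by
  simp [interlacing, Pi.le_def, forall_and]

lemma monotone_of_mem_interlacing (hb : Monotone b) (ha : a ∈ interlacing b) : Monotone a := by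
  intro i i' hii'
  rcases hii'.eq_or_lt with rfl | hlt
  · rfl
  · exact ((mem_interlacing.mp ha i).2.trans (hb (Fin.succ_le_castSucc_iff.mpr hlt))).trans
      (mem_interlacing.mp ha i').1

def strictCount (a : Fin k → ℕ) (b : Fin (k + 1) → ℕ) : ℕ :=
  #{i | b i.castSucc < a i ∧ a i < b i.succ}

theorem sum_interlacing_two_pow_mul_binomialDet (hb : StrictMono b) :
    ∑ a ∈ interlacing b, 2 ^ strictCount a b * binomialDet a = 2 ^ k * binomialDet b := by
  let weight (i : Fin k) (x : ℕ) : ℤ := if b i.castSucc < x ∧ x < b i.succ then 2 else 1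
  let rowsOf (a : Fin k → ℕ) (i : Fin k) : Fin k → ℤ := fun j => weight i (a i) * (a i).choose j
  have hterm : ∀ a : Fin k → ℕ,
      2 ^ strictCount a b * binomialDet a = detRowAlternating (rowsOf a) := by
    intro a
    rw [strictCount, ← prod_const, prod_filter, binomialDet, ← det_mul_column]
    rfl
  let diffs : Matrix (Fin k) (Fin k) ℤ :=
    of fun i l => (b i.succ).choose (l + 1) - (b i.castSucc).choose (l + 1)
  have hsum : (fun i => ∑ x ∈ Icc (b i.castSucc) (b i.succ), rowsOf (fun _ => x) i) =
      diffs * bidiag k := by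
    ext i j
    rw [Finset.sum_apply,
      mul_bidiag_apply diffs (fun i l => (b i.succ).choose l - (b i.castSucc).choose l)
        (fun _ _ => rfl) (fun _ => by simp),
      sum_Icc_weight_mul_choose (hb i.castSucc_lt_succ)]
    ring
  have hdiffs : diffs.det = binomialDet b := by
    rw [binomialDet, det_eq_det_sub_of_forall_apply_zero_eq_one _ fun _ => by simp]
    rfl
  rw [interlacing, Pi.Icc_eq, sum_congr rfl fun a _ => hterm a]
  -- `det` is multilinear in the rows, so the sum over the box is the determinant of row sums.
  refine ((detRowAlternating : (Fin k → ℤ) [⋀^Fin k]→ₗ[ℤ] ℤ).toMultilinearMap.map_sum_finset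
    (fun i x => rowsOf (fun _ => x) i) fun i => Icc (b i.castSucc) (b i.succ)).symm.trans ?_
  change det _ = _
  rw [hsum, det_mul, hdiffs, det_bidiag, mul_comm]

lemma countLE_le_countLE (ha : a ∈ interlacing b) (t : ℕ) :
    countLE a t ≤ countLE b t ∧ countLE b t ≤ countLE a t + 1 := by
  rw [mem_interlacing] at ha
  constructor
  · refine card_le_card_of_injOn Fin.castSucc (fun i hi => ?_) (Fin.castSucc_injective k).injOn
    simp only [coe_filter, mem_univ, true_and, Set.mem_ofPred_eq] at hi ⊢
    exact (ha i).1.trans hi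
  · have hsub : ({l | b l ≤ t} : Finset (Fin (k + 1))) ⊆
        insert 0 (({i | a i ≤ t} : Finset (Fin k)).map (Fin.succEmb k)) := by
      intro l hl
      simp only [mem_filter, mem_univ, true_and] at hl
      cases l using Fin.cases with
      | zero => exact mem_insert_self _ _
      | succ i => exact mem_insert_of_mem (mem_map_of_mem _ (by simpa using (ha i).2.trans hl))
    exact (card_le_card hsub).trans ((card_insert_le _ _).trans (by simp [countLE]))

lemma mem_interlacing_iff (ha : StrictMono a) (hb : StrictMono b) (han : ∀ i, a i < n)
    (hbn : ∀ i, b i < n) :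
    a ∈ interlacing b ↔ ∀ j : Fin n,
      ∑ j' ∈ {j' | j' ≤ j}, (rangeIndicator b j' - rangeIndicator a j') = 0 ∨
      ∑ j' ∈ {j' | j' ≤ j}, (rangeIndicator b j' - rangeIndicator a j') = 1 := by
  simp only [sum_sub_distrib, sum_rangeIndicator_le hb.injective hbn,
    sum_rangeIndicator_le ha.injective han]
  refine ⟨fun hab j => ?_, fun h => mem_interlacing.mpr fun i => ⟨?_, ?_⟩⟩
  · have := countLE_le_countLE hab j
    omega
  · have hi : (i : ℕ) < countLE a (a i) := (lt_countLE_iff ha.monotone).mpr le_rfl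
    have := h ⟨a i, han i⟩
    exact (lt_countLE_iff hb.monotone).mp (by rw [Fin.val_castSucc]; simp only at this; omega)
  · have hi : (i : ℕ) + 1 < countLE b (b i.succ) :=
      (lt_countLE_iff hb.monotone (i := i.succ)).mpr le_rfl
    have := h ⟨b i.succ, hbn i.succ⟩
    exact (lt_countLE_iff ha.monotone).mp (by simp only at this; omega)

lemma card_rangeIndicator_sub_eq_neg_one (ha : StrictMono a) (hb : StrictMono b)
    (han : ∀ i, a i < n) (hab : a ∈ interlacing b) :
    #{j : Fin n | rangeIndicator b j - rangeIndicator a j = -1} = strictCount a b := by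
  rw [mem_interlacing] at hab
  have hnotb : ∀ i, (¬ ∃ l, b l = a i) ↔ b i.castSucc < a i ∧ a i < b i.succ := by
    intro i
    refine ⟨fun h => ⟨(hab i).1.lt_of_ne fun he => h ⟨_, he⟩,
      (hab i).2.lt_of_ne fun he => h ⟨_, he.symm⟩⟩, fun ⟨h₁, h₂⟩ ⟨l, hl⟩ => ?_⟩
    rcases le_or_gt l i.castSucc with hli | hli
    · exact (hl ▸ hb.monotone hli).not_gt h₁
    · exact (hl ▸ hb.monotone (Fin.castSucc_lt_iff_succ_le.mp hli)).not_gt h₂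
  refine (card_bij (fun i _ => (⟨a i, han i⟩ : Fin n)) (fun i hi => ?_)
    (fun i₁ _ i₂ _ h => ha.injective (Fin.mk.inj_iff.mp h)) fun j hj => ?_).symm
  · simp only [mem_filter, mem_univ, true_and] at hi ⊢
    rw [(rangeIndicator_eq_one_iff (c := a)).mpr ⟨i, rfl⟩,
      rangeIndicator_eq_zero_iff.mpr ((hnotb i).mpr hi)]
    norm_num
  · simp only [mem_filter, mem_univ, true_and] at hj
    have hbj := rangeIndicator_eq_zero_or_one b j
    have haj := rangeIndicator_eq_zero_or_one a j
    obtain ⟨i, hi⟩ := rangeIndicator_eq_one_iff.mp (show rangeIndicator a j = 1 by omega)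
    refine ⟨i, ?_, Fin.ext hi⟩
    have hjb := rangeIndicator_eq_zero_iff.mp (show rangeIndicator b j = 0 by omega)
    simp only [mem_filter, mem_univ, true_and]
    exact (hnotb i).mp (by rwa [hi])

end Interlacing

section SortedSeq

variable {n k : ℕ}

def sortedSeq (s : Finset (Fin n)) (k : ℕ) : Fin k → ℕ :=
  fun i => if h : #s = k then s.orderEmbOfFin h i else 0

variable {s : Finset (Fin n)}

lemma sortedSeq_of_card_eq (h : #s = k) (i : Fin k) : sortedSeq s k i = s.orderEmbOfFin h i :=
  dif_pos h

lemma strictMono_sortedSeq (h : #s = k) : StrictMono (sortedSeq s k) := fun i i' hii' => by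
  simpa [sortedSeq_of_card_eq h] using (s.orderEmbOfFin h).strictMono hii'

lemma sortedSeq_lt (h : #s = k) (i : Fin k) : sortedSeq s k i < n := by
  simp [sortedSeq_of_card_eq h]

lemma rangeIndicator_sortedSeq (h : #s = k) (j : Fin n) :
    rangeIndicator (sortedSeq s k) j = if j ∈ s then 1 else 0 := by
  simp only [rangeIndicator, sortedSeq_of_card_eq h, Fin.val_inj]
  congr 1
  rw [← Finset.mem_coe, ← range_orderEmbOfFin s h]
  rfl

lemma sortedSeq_filter_rangeIndicator {c : Fin k → ℕ} (hc : StrictMono c) (hcn : ∀ i, c i < n) :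
    sortedSeq {j : Fin n | rangeIndicator c j = 1} k = c := by
  have hcard : #{j : Fin n | rangeIndicator c j = 1} = k := by
    have := card_filter_eq_one (n := n) (rangeIndicator_eq_zero_or_one c)
    rw [sum_rangeIndicator hc.injective hcn] at this
    exact_mod_cast this
  have hunique := orderEmbOfFin_unique hcard (f := fun i => ⟨c i, hcn i⟩)
    (fun i => by simp [rangeIndicator_eq_one_iff]) fun i i' h => hc h
  funext i
  rw [sortedSeq_of_card_eq hcard, ← hunique]

end SortedSeq

section PartialASM

variable {n k : ℕ}

/-- The top `k` rows of an ASM of order `n`, after which the columns with sum `1` are exactly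
those numbered by a value of `c`. -/
structure IsPartialASM (c : Fin k → ℕ) (M : Fin k → Fin n → ℤ) : Prop where
  entry_mem : ∀ i j, M i j = -1 ∨ M i j = 0 ∨ M i j = 1
  rowPrefix : ∀ i j, ∑ j' ∈ {j' | j' ≤ j}, M i j' = 0 ∨ ∑ j' ∈ {j' | j' ≤ j}, M i j' = 1
  colPrefix : ∀ i j, ∑ i' ∈ {i' | i' ≤ i}, M i' j = 0 ∨ ∑ i' ∈ {i' | i' ≤ i}, M i' j = 1
  rowSum : ∀ i, ∑ j, M i j = 1
  colSum : ∀ j, ∑ i, M i j = rangeIndicator c j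

open Classical in
noncomputable def partialASMs (n : ℕ) (c : Fin k → ℕ) : Finset (Fin k → Fin n → ℤ) :=
  {M ∈ Icc (fun _ _ => -1) (fun _ _ => 1) | IsPartialASM c M}

lemma mem_partialASMs {c : Fin k → ℕ} {M : Fin k → Fin n → ℤ} :
    M ∈ partialASMs n c ↔ IsPartialASM c M := by
  simp only [partialASMs, mem_filter, mem_Icc, and_iff_right_iff_imp]
  intro hM
  constructor <;> intro i j <;> rcases hM.entry_mem i j with h | h | h <;> simp [h]

def negOnes (M : Fin k → Fin n → ℤ) : ℕ := #{p : Fin k × Fin n | M p.1 p.2 = -1}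

lemma negOnes_snoc (M : Fin k → Fin n → ℤ) (r : Fin n → ℤ) :
    negOnes (Fin.snoc M r : Fin (k + 1) → Fin n → ℤ) = negOnes M + #{j | r j = -1} := by
  simp only [negOnes, card_filter, Fintype.sum_prod_type, Fin.sum_univ_castSucc, Fin.snoc_castSucc,
    Fin.snoc_last]

def colSupport (M : Fin k → Fin n → ℤ) : Fin k → ℕ := sortedSeq {j | ∑ i, M i j = 1} k

namespace IsPartialASM

lemma colSupport_eq {c : Fin k → ℕ} {M : Fin k → Fin n → ℤ} (hM : IsPartialASM c M)
    (hc : StrictMono c) (hcn : ∀ i, c i < n) : colSupport M = c := by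
  simp only [colSupport, hM.colSum]
  exact sortedSeq_filter_rangeIndicator hc hcn

variable {b : Fin (k + 1) → ℕ} {M : Fin (k + 1) → Fin n → ℤ}

lemma init_colSum_eq_zero_or_one (hM : IsPartialASM b M) (j : Fin n) :
    ∑ i, Fin.init M i j = 0 ∨ ∑ i, Fin.init M i j = 1 := by
  cases k with
  | zero => simp
  | succ k =>
    have h := hM.colPrefix (Fin.last k).castSucc j
    rwa [filter_ge_eq_Iic, Fin.sum_Iic_castSucc, ← Fin.top_eq_last, Iic_top] at h

lemma card_init_colSum_eq_one (hM : IsPartialASM b M) : #{j | ∑ i, Fin.init M i j = 1} = k := by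
  have := card_filter_eq_one hM.init_colSum_eq_zero_or_one
  rw [sum_comm, sum_congr rfl fun i _ => hM.rowSum i.castSucc] at this
  simp at this
  exact_mod_cast this

lemma rangeIndicator_colSupport_init (hM : IsPartialASM b M) (j : Fin n) :
    rangeIndicator (colSupport (Fin.init M)) j = ∑ i, Fin.init M i j := by
  rw [colSupport, rangeIndicator_sortedSeq hM.card_init_colSum_eq_one]
  rcases hM.init_colSum_eq_zero_or_one j with h | h <;> simp [h]

lemma strictMono_colSupport_init (hM : IsPartialASM b M) : StrictMono (colSupport (Fin.init M)) :=
  strictMono_sortedSeq hM.card_init_colSum_eq_one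

lemma colSupport_init_lt (hM : IsPartialASM b M) (i : Fin k) : colSupport (Fin.init M) i < n :=
  sortedSeq_lt hM.card_init_colSum_eq_one i

lemma last_eq (hM : IsPartialASM b M) (j : Fin n) :
    M (Fin.last k) j = rangeIndicator b j - rangeIndicator (colSupport (Fin.init M)) j := by
  have := hM.colSum j
  rw [Fin.sum_univ_castSucc] at this
  rw [hM.rangeIndicator_colSupport_init]
  simp only [Fin.init]
  linarith

lemma init (hM : IsPartialASM b M) : IsPartialASM (colSupport (Fin.init M)) (Fin.init M) where
  entry_mem i := hM.entry_mem i.castSucc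
  rowPrefix i := hM.rowPrefix i.castSucc
  colPrefix i j := by
    have h := hM.colPrefix i.castSucc j
    rwa [filter_ge_eq_Iic, Fin.sum_Iic_castSucc, ← filter_ge_eq_Iic] at h
  rowSum i := hM.rowSum i.castSucc
  colSum j := (hM.rangeIndicator_colSupport_init j).symm

lemma colSupport_init_mem_interlacing (hM : IsPartialASM b M) (hb : StrictMono b)
    (hbn : ∀ i, b i < n) : colSupport (Fin.init M) ∈ interlacing b := by
  rw [mem_interlacing_iff hM.strictMono_colSupport_init hb hM.colSupport_init_lt hbn]
  intro j
  simpa only [hM.last_eq] using hM.rowPrefix (Fin.last k) j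

lemma snoc {a : Fin k → ℕ} {M' : Fin k → Fin n → ℤ} (hM' : IsPartialASM a M')
    (ha : StrictMono a) (hb : StrictMono b) (hbn : ∀ i, b i < n) (hab : a ∈ interlacing b) :
    IsPartialASM b
      (Fin.snoc M' fun j => rangeIndicator b j - rangeIndicator a j : Fin (k + 1) → Fin n → ℤ) := by
  have han : ∀ i, a i < n := fun i => ((mem_interlacing.mp hab i).2).trans_lt (hbn i.succ)
  constructor
  · intro i j
    cases i using Fin.lastCases with
    | last =>
      have := rangeIndicator_eq_zero_or_one b j
      have := rangeIndicator_eq_zero_or_one a j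
      simp only [Fin.snoc_last]
      omega
    | cast i => simpa using hM'.entry_mem i j
  · intro i j
    cases i using Fin.lastCases with
    | last => simpa using (mem_interlacing_iff ha hb han hbn).mp hab j
    | cast i => simpa using hM'.rowPrefix i j
  · intro i j
    cases i using Fin.lastCases with
    | last =>
      have := rangeIndicator_eq_zero_or_one b j
      rw [filter_ge_eq_Iic, ← Fin.top_eq_last, Iic_top, Fin.sum_univ_castSucc]
      simp [hM'.colSum]
      omega
    | cast i =>
      rw [filter_ge_eq_Iic, Fin.sum_Iic_castSucc, ← filter_ge_eq_Iic]
      simpa using hM'.colPrefix i j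
  · intro i
    cases i using Fin.lastCases with
    | last =>
      simp [sum_sub_distrib, sum_rangeIndicator hb.injective hbn,
        sum_rangeIndicator ha.injective han]
    | cast i => simpa using hM'.rowSum i
  · intro j
    simp [Fin.sum_univ_castSucc, hM'.colSum]

end IsPartialASM

open Classical in
lemma sum_partialASMs_succ {b : Fin (k + 1) → ℕ} (hb : StrictMono b) (hbn : ∀ i, b i < n) :
    ∑ M ∈ partialASMs n b, (2 : ℤ) ^ negOnes M =
      ∑ a ∈ interlacing b with StrictMono a,
        2 ^ strictCount a b * ∑ M' ∈ partialASMs n a, (2 : ℤ) ^ negOnes M' := by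
  simp only [mul_sum]
  rw [← sum_sigma (f := fun p : (_ : Fin k → ℕ) × (Fin k → Fin n → ℤ) =>
    2 ^ strictCount p.1 b * 2 ^ negOnes p.2)]
  refine sum_bij' (fun M _ => ⟨colSupport (Fin.init M), Fin.init M⟩)
    (fun p _ => Fin.snoc p.2 fun j => rangeIndicator b j - rangeIndicator p.1 j)
    (fun M hM => ?_) (fun p hp => ?_) (fun M hM => ?_) (fun p hp => ?_) (fun M hM => ?_)
  · rw [mem_partialASMs] at hM
    simp only [mem_sigma, mem_filter, mem_partialASMs]
    exact ⟨⟨hM.colSupport_init_mem_interlacing hb hbn, hM.strictMono_colSupport_init⟩, hM.init⟩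
  · simp only [mem_sigma, mem_filter, mem_partialASMs] at hp ⊢
    exact hp.2.snoc hp.1.2 hb hbn hp.1.1
  · rw [mem_partialASMs] at hM
    conv_rhs => rw [← Fin.snoc_init_self M]
    congr 1
    exact (funext hM.last_eq).symm
  · simp only [mem_sigma, mem_filter, mem_partialASMs] at hp
    simp only [Fin.init_snoc]
    rw [hp.2.colSupport_eq hp.1.2 fun i => ((mem_interlacing.mp hp.1.1 i).2).trans_lt (hbn i.succ)]
  · rw [mem_partialASMs] at hM
    conv_lhs => rw [← Fin.snoc_init_self M]
    rw [negOnes_snoc, pow_add, mul_comm]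
    congr 2
    simp only [hM.last_eq]
    exact card_rangeIndicator_sub_eq_neg_one hM.strictMono_colSupport_init hb hM.colSupport_init_lt
      (hM.colSupport_init_mem_interlacing hb hbn)

end PartialASM

theorem sum_partialASMs_two_pow_negOnes {n k : ℕ} {b : Fin k → ℕ} (hb : StrictMono b)
    (hbn : ∀ i, b i < n) :
    ∑ M ∈ partialASMs n b, (2 : ℤ) ^ negOnes M = 2 ^ k.choose 2 * binomialDet b := by
  induction k with
  | zero =>
    have hmem : (fun i => i.elim0 : Fin 0 → Fin n → ℤ) ∈ partialASMs n b :=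
      mem_partialASMs.mpr ⟨nofun, nofun, nofun, nofun, fun j => by simp [rangeIndicator]⟩
    rw [eq_singleton_iff_unique_mem.mpr ⟨hmem, fun _ _ => Subsingleton.elim _ _⟩]
    simp [negOnes, binomialDet]
  | succ k ih =>
    have hzero : ∀ a ∈ interlacing b, 2 ^ strictCount a b * binomialDet a ≠ 0 → StrictMono a :=
      fun a ha hne => (monotone_of_mem_interlacing hb.monotone ha).strictMono_of_injective
        (not_not.mp fun hinj => hne (by rw [binomialDet_eq_zero hinj, mul_zero]))
    calc ∑ M ∈ partialASMs n b, (2 : ℤ) ^ negOnes M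
        = ∑ a ∈ interlacing b with StrictMono a,
            2 ^ k.choose 2 * (2 ^ strictCount a b * binomialDet a) := by
          rw [sum_partialASMs_succ hb hbn]
          refine sum_congr rfl fun a ha => ?_
          rw [mem_filter, mem_interlacing] at ha
          rw [ih ha.2 fun i => (ha.1 i).2.trans_lt (hbn i.succ)]
          ring
      _ = 2 ^ k.choose 2 * (2 ^ k * binomialDet b) := by
          rw [← mul_sum, sum_filter_of_ne hzero, sum_interlacing_two_pow_mul_binomialDet hb]
      _ = 2 ^ (k + 1).choose 2 * binomialDet b := by
          rw [Nat.choose_succ_succ', Nat.choose_one_right, pow_add]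
          ring

lemma isPartialASM_val_iff {n : ℕ} {A : Matrix (Fin n) (Fin n) ℤ} :
    IsPartialASM (fun i : Fin n => (i : ℕ)) A ↔ IsASM A := by
  have hval : ∀ j : Fin n, rangeIndicator (fun i : Fin n => (i : ℕ)) j = 1 := fun j =>
    rangeIndicator_eq_one_iff.mpr ⟨j, rfl⟩
  exact ⟨fun h => ⟨h.entry_mem, h.rowPrefix, h.colPrefix, h.rowSum,
    fun j => (h.colSum j).trans (hval j)⟩,
    fun ⟨h₁, h₂, h₃, h₄, h₅⟩ => ⟨h₁, h₂, h₃, h₄, fun j => (h₅ j).trans (hval j).symm⟩⟩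

end ASM

/-- The `2`-enumeration of ASMs: the sum over all ASMs `A` of order `n` of
`2 ^ (number of −1 entries of A)` equals `2 ^ (n(n-1)/2)`. -/
theorem asm_two_enumeration {n : ℕ} (s : Finset (Matrix (Fin n) (Fin n) ℤ))
    (hs : ∀ A, A ∈ s ↔ IsASM A) :
    (∑ A ∈ s,
        2 ^ (Finset.univ.filter (fun p : Fin n × Fin n => A p.1 p.2 = -1)).card) =
      2 ^ (n * (n - 1) / 2) := by
  have hs' : s = (ASM.partialASMs n fun i : Fin n => (i : ℕ) :
      Finset (Matrix (Fin n) (Fin n) ℤ)) := by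
    ext A
    exact (hs A).trans (ASM.mem_partialASMs.trans ASM.isPartialASM_val_iff).symm
  have hcount := ASM.sum_partialASMs_two_pow_negOnes (n := n) (fun _ _ h => h) Fin.isLt
  rw [ASM.binomialDet_val, mul_one] at hcount
  rw [← Nat.choose_two_right, hs']
  exact_mod_cast hcount
end

section
/- For all n ≥ 1, the formula ∏_{k=0}^{n-1} (3k+1)!/(n+k)! defines an integer, and for n = 1,...,6 it takes the values 1, 2, 7, 42, 429, 7436. -/
/-- The Mills–Robbins–Rumsey product counting ASMs of order `n`, as a rational:
`∏_{k=0}^{n-1} (3k+1)!/(n+k)!`. -/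
def asmProduct (n : ℕ) : ℚ :=
  ∏ k ∈ Finset.range n, ((3 * k + 1).factorial : ℚ) / ((n + k).factorial : ℚ)

/-! By Legendre's formula, `∏ (n+k)! ∣ ∏ (3k+1)!` follows once
`∑_{k<n} ⌊(n+k)/m⌋ ≤ ∑_{k<n} ⌊(3k+1)/m⌋` for every `m` (Landau's criterion).
Replacing `n` by `n + m` adds `3n + m` to both sums, so only `n ≤ m` matters; there every
quotient is at most `2` and both sums can be counted explicitly. -/

open Finset
open scoped Nat

namespace Nat

theorem prod_factorial_dvd_prod_factorial_of_sum_div_le {ι : Type*} (s : Finset ι)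
    (a b : ι → ℕ) (h : ∀ m, ∑ i ∈ s, b i / m ≤ ∑ i ∈ s, a i / m) :
    ∏ i ∈ s, (b i)! ∣ ∏ i ∈ s, (a i)! := by
  have prod_ne_zero (c : ι → ℕ) : ∏ i ∈ s, (c i)! ≠ 0 :=
    prod_ne_zero_iff.mpr fun i _ => factorial_ne_zero _
  rw [← factorization_prime_le_iff_dvd (prod_ne_zero b) (prod_ne_zero a)]
  intro p hp
  set B := ∑ i ∈ s, (a i + b i) + 1
  have legendre (c : ι → ℕ) (hc : ∀ i ∈ s, c i ≤ a i + b i) :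
      (∏ i ∈ s, (c i)!).factorization p = ∑ j ∈ Ico 1 B, ∑ i ∈ s, c i / p ^ j := by
    rw [factorization_prod fun i _ => factorial_ne_zero _, Finset.sum_apply', sum_comm]
    refine sum_congr rfl fun i hi => factorization_factorial hp ?_
    calc log p (c i) ≤ c i := log_le_self _ _
      _ ≤ a i + b i := hc i hi
      _ < B := lt_succ_of_le (single_le_sum (f := fun i => a i + b i) (fun _ _ => zero_le _) hi)
  rw [legendre b fun _ _ => le_add_self, legendre a fun _ _ => Nat.le_add_right _ _]
  exact sum_le_sum fun j _ => h _

theorem sum_range_ite_le (a n : ℕ) :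
    ∑ k ∈ range n, (if a ≤ k then 1 else 0) = n - a := by
  induction n with
  | zero => simp
  | succ n ih => rw [sum_range_succ, ih]; split <;> omega

theorem sum_range_add_div (x : ℕ) {m : ℕ} (hm : 0 < m) :
    ∑ i ∈ range m, (x + i) / m = x := by
  induction x with
  | zero => simpa using sum_eq_zero fun i hi => div_eq_of_lt (mem_range.mp hi)
  | succ x ih =>
    have shift := sum_range_succ' (fun i => (x + i) / m) m
    rw [sum_range_succ, ih, add_div_right x hm] at shift
    simp only [add_zero] at shift
    simp only [add_right_comm x 1, add_assoc]
    omega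

end Nat

open Nat

theorem sum_range_three_mul_add_one_div_of_le {m n : ℕ} (hnm : n ≤ m) :
    ∑ k ∈ range n, (3 * k + 1) / m = (n - (m + 1) / 3) + (n - (2 * m + 1) / 3) := by
  rw [← sum_range_ite_le, ← sum_range_ite_le, ← sum_add_distrib]
  refine sum_congr rfl fun k hk => ?_
  have hk := mem_range.mp hk
  rcases lt_or_ge (3 * k + 1) m with h₁ | h₁
  · rw [div_eq_of_lt h₁, if_neg (by omega), if_neg (by omega)]
  rcases lt_or_ge (3 * k + 1) (2 * m) with h₂ | h₂
  · rw [if_pos (by omega), if_neg (by omega)]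
    exact Nat.div_eq_of_lt_le (by omega) (by omega)
  · rw [if_pos (by omega), if_pos (by omega)]
    exact Nat.div_eq_of_lt_le (by omega) (by omega)

theorem sum_range_add_div_of_le {m n : ℕ} (hnm : n ≤ m) :
    ∑ k ∈ range n, (n + k) / m = n - (m - n) := by
  rw [← sum_range_ite_le]
  refine sum_congr rfl fun k hk => ?_
  have hk := mem_range.mp hk
  split_ifs with h
  · exact Nat.div_eq_of_lt_le (by omega) (by omega)
  · exact div_eq_of_lt (by omega)

theorem sum_range_three_mul_add_one_div_add {m : ℕ} (hm : 0 < m) (n : ℕ) :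
    ∑ k ∈ range (m + n), (3 * k + 1) / m = ∑ k ∈ range n, (3 * k + 1) / m + 3 * n + m := by
  have period : ∑ k ∈ range m, (3 * k + 1) / m = m := by
    rw [sum_range_three_mul_add_one_div_of_le le_rfl]; omega
  have shift (k : ℕ) : (3 * (m + k) + 1) / m = (3 * k + 1) / m + 3 := by
    rw [show 3 * (m + k) + 1 = 3 * k + 1 + 3 * m by ring, add_mul_div_right _ _ hm]
  simp only [sum_range_add, period, shift, sum_add_distrib, sum_const, card_range, smul_eq_mul]
  ring

theorem sum_range_add_div_add {m : ℕ} (hm : 0 < m) (n : ℕ) :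
    ∑ k ∈ range (n + m), (n + m + k) / m = ∑ k ∈ range n, (n + k) / m + 3 * n + m := by
  have shift (k : ℕ) : (n + m + k) / m = (n + k) / m + 1 := by
    rw [add_right_comm, add_div_right _ hm]
  have tail : ∑ i ∈ range m, (n + (n + i)) / m = 2 * n := by
    simp only [← add_assoc, ← two_mul, sum_range_add_div _ hm]
  simp only [shift, sum_add_distrib, sum_const, card_range, smul_eq_mul, mul_one,
    sum_range_add, tail]
  ring

theorem sum_range_add_div_le_sum_range_three_mul_add_one_div (m n : ℕ) :
    ∑ k ∈ range n, (n + k) / m ≤ ∑ k ∈ range n, (3 * k + 1) / m := by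
  rcases Nat.eq_zero_or_pos m with rfl | hm
  · simp
  induction n using Nat.strong_induction_on with
  | _ n ih =>
  rcases le_or_gt n m with hnm | hmn
  · rw [sum_range_add_div_of_le hnm, sum_range_three_mul_add_one_div_of_le hnm]
    omega
  · obtain ⟨n, rfl⟩ : ∃ n', n = n' + m := ⟨n - m, by omega⟩
    rw [sum_range_add_div_add hm, add_comm n m, sum_range_three_mul_add_one_div_add hm]
    have hn := ih n (by omega)
    omega

theorem asmProduct_eq_natCast_div (n : ℕ) :
    asmProduct n =
      (((∏ k ∈ range n, (3 * k + 1)!) / ∏ k ∈ range n, (n + k)! : ℕ) : ℚ) := by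
  have hdvd := prod_factorial_dvd_prod_factorial_of_sum_div_le (range n) (fun k => 3 * k + 1)
    (fun k => n + k) fun m => sum_range_add_div_le_sum_range_three_mul_add_one_div m n
  rw [Nat.cast_div hdvd (by positivity), asmProduct, prod_div_distrib]
  push_cast
  rfl

/-- For all `n ≥ 1` the product `∏_{k=0}^{n-1} (3k+1)!/(n+k)!` is a (nonnegative)
integer, and for `n = 1,…,6` it takes the values `1, 2, 7, 42, 429, 7436`. -/
theorem asmProduct_integer_and_values :
    (∀ n, 1 ≤ n → ∃ m : ℕ, asmProduct n = (m : ℚ)) ∧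
    asmProduct 1 = 1 ∧ asmProduct 2 = 2 ∧ asmProduct 3 = 7 ∧
    asmProduct 4 = 42 ∧ asmProduct 5 = 429 ∧ asmProduct 6 = 7436 := by
  refine ⟨fun n _ => ⟨_, asmProduct_eq_natCast_div n⟩, ?_⟩
  norm_num [asmProduct, prod_range_succ, factorial]
end
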